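/- arXiv:math/0308140 — 9 statements merged into one kernel-verified Lean document; each statement's English description precedes it below -/
import Mathlib

section
/- Fix an irrational number α ∈ (0,1). Then the map ρ ↦ s_{α,ρ} from [0,1) into {0,1}^ℕ (with the product topology, equivalently the metric d(x,y) = 2^{−min{k : x(k) ≠ y(k)}}) is continuous from the right at every ρ₀ ∈ [0,1), and the map ρ ↦ s'_{α,ρ} is continuous from the left at every ρ₀ ∈ (0,1). -/
/-- Lower mechanical word of slope `α` and intercept `ρ`. -/
noncomputable def sLow (α ρ : ℝ) (n : ℕ) : ℤ := ⌊α * (n + 1) + ρ⌋ - ⌊α * n + ρ⌋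

/-- Upper mechanical word of slope `α` and intercept `ρ`. -/
noncomputable def sUp (α ρ : ℝ) (n : ℕ) : ℤ := ⌈α * (n + 1) + ρ⌉ - ⌈α * n + ρ⌉

lemma floor_eventually_right (x : ℝ) : ∀ᶠ y in nhdsWithin x (Set.Ici x), ⌊y⌋ = ⌊x⌋ := by
  have hmem : Set.Ico x ((⌊x⌋ : ℝ) + 1) ∈ nhdsWithin x (Set.Ici x) :=
    Ico_mem_nhdsGE_of_mem ⟨le_refl x, Int.lt_floor_add_one x⟩
  filter_upwards [hmem] with y hy
  exact Int.floor_eq_iff.mpr ⟨le_trans (Int.floor_le x) hy.1, hy.2⟩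

lemma ceil_eventually_left (x : ℝ) : ∀ᶠ y in nhdsWithin x (Set.Iic x), ⌈y⌉ = ⌈x⌉ := by
  have hmem : Set.Ioc ((⌈x⌉ : ℝ) - 1) x ∈ nhdsWithin x (Set.Iic x) :=
    Ioc_mem_nhdsLE_of_mem ⟨by linarith [Int.ceil_lt_add_one x], le_refl x⟩
  filter_upwards [hmem] with y hy
  exact Int.ceil_eq_iff.mpr ⟨hy.1, le_trans hy.2 (Int.le_ceil x)⟩

lemma shift_tendsto_right (c ρ₀ : ℝ) :
    Filter.Tendsto (fun ρ : ℝ => c + ρ) (nhdsWithin ρ₀ (Set.Ici ρ₀))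
      (nhdsWithin (c + ρ₀) (Set.Ici (c + ρ₀))) := by
  apply tendsto_nhdsWithin_of_tendsto_nhds_of_eventually_within
  · exact ((continuous_add_left c).tendsto ρ₀).mono_left nhdsWithin_le_nhds
  · filter_upwards [self_mem_nhdsWithin] with ρ hρ
    exact add_le_add_right hρ c

lemma shift_tendsto_left (c ρ₀ : ℝ) :
    Filter.Tendsto (fun ρ : ℝ => c + ρ) (nhdsWithin ρ₀ (Set.Iic ρ₀))
      (nhdsWithin (c + ρ₀) (Set.Iic (c + ρ₀))) := by
  apply tendsto_nhdsWithin_of_tendsto_nhds_of_eventually_within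
  · exact ((continuous_add_left c).tendsto ρ₀).mono_left nhdsWithin_le_nhds
  · filter_upwards [self_mem_nhdsWithin] with ρ hρ
    exact add_le_add_right hρ c

theorem stmt0 (α : ℝ) (hα : Irrational α) (hα0 : 0 < α) (hα1 : α < 1) :
    (∀ ρ₀ : ℝ, ρ₀ ∈ Set.Ico (0 : ℝ) 1 →
      ContinuousWithinAt (fun ρ : ℝ => sLow α ρ) (Set.Ici ρ₀) ρ₀) ∧
    (∀ ρ₀ : ℝ, ρ₀ ∈ Set.Ioo (0 : ℝ) 1 →
      ContinuousWithinAt (fun ρ : ℝ => sUp α ρ) (Set.Iic ρ₀) ρ₀) := by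
  constructor
  · intro ρ₀ _
    rw [continuousWithinAt_pi]
    intro n
    have h1 : ∀ᶠ ρ in nhdsWithin ρ₀ (Set.Ici ρ₀), ⌊α * (n + 1) + ρ⌋ = ⌊α * (n + 1) + ρ₀⌋ :=
      (shift_tendsto_right (α * (n + 1)) ρ₀).eventually (floor_eventually_right _)
    have h2 : ∀ᶠ ρ in nhdsWithin ρ₀ (Set.Ici ρ₀), ⌊α * n + ρ⌋ = ⌊α * n + ρ₀⌋ :=
      (shift_tendsto_right (α * n) ρ₀).eventually (floor_eventually_right _)
    refine Filter.Tendsto.congr' ?_ tendsto_const_nhds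
    filter_upwards [h1, h2] with ρ e1 e2
    simp [sLow, e1, e2]
  · intro ρ₀ _
    rw [continuousWithinAt_pi]
    intro n
    have h1 : ∀ᶠ ρ in nhdsWithin ρ₀ (Set.Iic ρ₀), ⌈α * (n + 1) + ρ⌉ = ⌈α * (n + 1) + ρ₀⌉ :=
      (shift_tendsto_left (α * (n + 1)) ρ₀).eventually (ceil_eventually_left _)
    have h2 : ∀ᶠ ρ in nhdsWithin ρ₀ (Set.Iic ρ₀), ⌈α * n + ρ⌉ = ⌈α * n + ρ₀⌉ :=
      (shift_tendsto_left (α * n) ρ₀).eventually (ceil_eventually_left _)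
    refine Filter.Tendsto.congr' ?_ tendsto_const_nhds
    filter_upwards [h1, h2] with ρ e1 e2
    simp [sUp, e1, e2]
end

section
/- Let α ∈ (0,1) be irrational. The closure, in the product topology on {0,1}^ℕ, of the shift-orbit {σ^n(s'_{α,0}) : n ≥ 0} of the upper mechanical word s'_{α,0} equals the set of all mechanical words of slope α, namely {s_{α,ρ} : ρ ∈ [0,1)} ∪ {s'_{α,ρ} : ρ ∈ [0,1)}. -/
lemma sUp_add_int (α ρ : ℝ) (m : ℤ) (k : ℕ) : sUp α (ρ + m) k = sUp α ρ k := by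
  unfold sUp
  rw [← add_assoc, ← add_assoc, Int.ceil_add_intCast, Int.ceil_add_intCast]
  ring

lemma sUp_left (α ρ : ℝ) (k : ℕ) :
    ∃ δ > 0, ∀ ρ', ρ - δ < ρ' → ρ' ≤ ρ → sUp α ρ' k = sUp α ρ k := by
  set x1 := α * (k + 1) + ρ with hx1
  set x0 := α * k + ρ with hx0
  have h1 : (⌈x1⌉ : ℝ) - 1 < x1 := by have := Int.ceil_lt_add_one x1; linarith
  have h0 : (⌈x0⌉ : ℝ) - 1 < x0 := by have := Int.ceil_lt_add_one x0; linarith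
  refine ⟨min (x1 - ((⌈x1⌉ : ℝ) - 1)) (x0 - ((⌈x0⌉ : ℝ) - 1)), lt_min (by linarith) (by linarith), ?_⟩
  intro ρ' hl hr
  have hm1 := min_le_left (x1 - ((⌈x1⌉ : ℝ) - 1)) (x0 - ((⌈x0⌉ : ℝ) - 1))
  have hm0 := min_le_right (x1 - ((⌈x1⌉ : ℝ) - 1)) (x0 - ((⌈x0⌉ : ℝ) - 1))
  have e1 : ⌈α * (k + 1) + ρ'⌉ = ⌈x1⌉ := by
    rw [Int.ceil_eq_iff]
    constructor
    · linarith
    · have := Int.le_ceil x1; linarith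
  have e0 : ⌈α * k + ρ'⌉ = ⌈x0⌉ := by
    rw [Int.ceil_eq_iff]
    constructor
    · linarith
    · have := Int.le_ceil x0; linarith
  unfold sUp
  rw [e1, e0]

lemma sUp_right (α ρ : ℝ) (k : ℕ) :
    ∃ δ > 0, ∀ ρ', ρ < ρ' → ρ' < ρ + δ → sUp α ρ' k = sLow α ρ k := by
  set x1 := α * (k + 1) + ρ with hx1
  set x0 := α * k + ρ with hx0
  have h1 : x1 < (⌊x1⌋ : ℝ) + 1 := Int.lt_floor_add_one x1
  have h0 : x0 < (⌊x0⌋ : ℝ) + 1 := Int.lt_floor_add_one x0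
  refine ⟨min (((⌊x1⌋ : ℝ) + 1) - x1) (((⌊x0⌋ : ℝ) + 1) - x0), lt_min (by linarith) (by linarith), ?_⟩
  intro ρ' hl hr
  have hm1 := min_le_left (((⌊x1⌋ : ℝ) + 1) - x1) (((⌊x0⌋ : ℝ) + 1) - x0)
  have hm0 := min_le_right (((⌊x1⌋ : ℝ) + 1) - x1) (((⌊x0⌋ : ℝ) + 1) - x0)
  have e1 : ⌈α * (k + 1) + ρ'⌉ = ⌊x1⌋ + 1 := by
    rw [Int.ceil_eq_iff]
    have := Int.floor_le x1
    constructor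
    · push_cast; linarith
    · push_cast; linarith
  have e0 : ⌈α * k + ρ'⌉ = ⌊x0⌋ + 1 := by
    rw [Int.ceil_eq_iff]
    have := Int.floor_le x0
    constructor
    · push_cast; linarith
    · push_cast; linarith
  unfold sUp sLow
  rw [e1, e0]
  ring

lemma orbit_eq (α : ℝ) (n : ℕ) :
    (fun k => sUp α 0 (k + n)) = sUp α (Int.fract (n * α)) := by
  funext k
  have hf : Int.fract ((n : ℝ) * α) = n * α - ⌊(n : ℝ) * α⌋ := rfl
  have e1 : α * ((k + n : ℕ) + 1) + 0
      = (α * (k + 1) + Int.fract ((n : ℝ) * α)) + (⌊(n : ℝ) * α⌋ : ℤ) := by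
    rw [hf]; push_cast; ring
  have e0 : α * ((k + n : ℕ)) + 0
      = (α * k + Int.fract ((n : ℝ) * α)) + (⌊(n : ℝ) * α⌋ : ℤ) := by
    rw [hf]; push_cast; ring
  show sUp α 0 (k + n) = sUp α (Int.fract ((n : ℝ) * α)) k
  unfold sUp
  rw [e1, e0, Int.ceil_add_intCast, Int.ceil_add_intCast]
  ring

lemma sUp_left_fin (α ρ : ℝ) (N : ℕ) :
    ∃ δ > 0, ∀ ρ', ρ - δ < ρ' → ρ' ≤ ρ → ∀ k < N, sUp α ρ' k = sUp α ρ k := by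
  induction N with
  | zero => exact ⟨1, one_pos, fun _ _ _ k hk => absurd hk (Nat.not_lt_zero k)⟩
  | succ N ih =>
    obtain ⟨δ₁, hδ₁, h₁⟩ := ih
    obtain ⟨δ₂, hδ₂, h₂⟩ := sUp_left α ρ N
    refine ⟨min δ₁ δ₂, lt_min hδ₁ hδ₂, fun ρ' hl hr k hk => ?_⟩
    rcases Nat.lt_succ_iff_lt_or_eq.mp hk with h | h
    · exact h₁ ρ' (by have := min_le_left δ₁ δ₂; linarith) hr k h
    · subst h; exact h₂ ρ' (by have := min_le_right δ₁ δ₂; linarith) hr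

lemma sUp_right_fin (α ρ : ℝ) (N : ℕ) :
    ∃ δ > 0, ∀ ρ', ρ < ρ' → ρ' < ρ + δ → ∀ k < N, sUp α ρ' k = sLow α ρ k := by
  induction N with
  | zero => exact ⟨1, one_pos, fun _ _ _ k hk => absurd hk (Nat.not_lt_zero k)⟩
  | succ N ih =>
    obtain ⟨δ₁, hδ₁, h₁⟩ := ih
    obtain ⟨δ₂, hδ₂, h₂⟩ := sUp_right α ρ N
    refine ⟨min δ₁ δ₂, lt_min hδ₁ hδ₂, fun ρ' hl hr k hk => ?_⟩
    rcases Nat.lt_succ_iff_lt_or_eq.mp hk with h | h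
    · exact h₁ ρ' hl (by have := min_le_left δ₁ δ₂; linarith) k h
    · subst h; exact h₂ ρ' hl (by have := min_le_right δ₁ δ₂; linarith)

lemma exists_fract_small (α : ℝ) (hα : Irrational α) {ε : ℝ} (hε : 0 < ε) :
    ∃ d : ℕ, 0 < d ∧ (Int.fract (d * α) < ε ∨ 1 - ε < Int.fract (d * α)) := by
  obtain ⟨M, hM⟩ := exists_nat_gt (1 / ε)
  have hM0 : 0 < M := by
    by_contra h
    push_neg at h
    interval_cases M
    simp at hM
    linarith [one_div_pos.mpr hε, hM]
  have hMR : (0 : ℝ) < M := by exact_mod_cast hM0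
  -- pigeonhole
  have maps : ∀ i ∈ Finset.range (M + 1),
      (⌊Int.fract ((i : ℝ) * α) * M⌋).toNat ∈ Finset.range M := by
    intro i _
    rw [Finset.mem_range]
    have h1 : Int.fract ((i : ℝ) * α) * M < M := by
      have := Int.fract_lt_one ((i : ℝ) * α)
      nlinarith
    have h2 : (⌊Int.fract ((i : ℝ) * α) * M⌋ : ℝ) < M := lt_of_le_of_lt (Int.floor_le _) h1
    have : ⌊Int.fract ((i : ℝ) * α) * M⌋ < (M : ℤ) := by exact_mod_cast h2
    omega
  obtain ⟨i, hi, j, hj, hij, heq⟩ :=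
    Finset.exists_ne_map_eq_of_card_lt_of_maps_to
      (by simp : (Finset.range M).card < (Finset.range (M + 1)).card) maps
  -- WLOG i < j
  wlog hlt : i < j generalizing i j
  · exact this j hj i hi hij.symm heq.symm (by omega)
  set fi := Int.fract ((i : ℝ) * α) with hfi
  set fj := Int.fract ((j : ℝ) * α) with hfj
  have hdist : |fj - fi| < ε := by
    have hnnI : (0:ℤ) ≤ ⌊fi * M⌋ :=
      Int.floor_nonneg.mpr (mul_nonneg (Int.fract_nonneg _) hMR.le)
    have hnnJ : (0:ℤ) ≤ ⌊fj * M⌋ :=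
      Int.floor_nonneg.mpr (mul_nonneg (Int.fract_nonneg _) hMR.le)
    have heq' : ⌊fi * M⌋ = ⌊fj * M⌋ := by omega
    have b1 : (⌊fi * M⌋ : ℝ) ≤ fi * M := Int.floor_le _
    have b2 : fi * M < ⌊fi * M⌋ + 1 := Int.lt_floor_add_one _
    have b3 : (⌊fj * M⌋ : ℝ) ≤ fj * M := Int.floor_le _
    have b4 : fj * M < ⌊fj * M⌋ + 1 := Int.lt_floor_add_one _
    rw [heq'] at b1 b2
    have h5 : |fj - fi| < 1 / M := by
      rw [abs_lt]
      have hA : (fj - fi) * M < 1 := by nlinarith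
      have hB : (fi - fj) * M < 1 := by nlinarith
      have hA' : fj - fi < 1 / M := (lt_div_iff₀ hMR).mpr hA
      have hB' : fi - fj < 1 / M := (lt_div_iff₀ hMR).mpr hB
      constructor <;> linarith
    have h1M : (1:ℝ)/M < ε := by
      rw [div_lt_iff₀ hMR]
      rw [div_lt_iff₀ hε] at hM
      nlinarith
    exact h5.trans h1M
  refine ⟨j - i, by omega, ?_⟩
  have hdc : (((j - i : ℕ)) : ℝ) = (j : ℝ) - i := by
    push_cast [Nat.cast_sub hlt.le]; ring
  set t := fj - fi with ht
  have hfr : Int.fract (((j - i : ℕ) : ℝ) * α) = Int.fract t := by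
    have : ((j - i : ℕ) : ℝ) * α = t + ((⌊(j : ℝ) * α⌋ - ⌊(i : ℝ) * α⌋ : ℤ) : ℝ) := by
      rw [hdc, ht, hfj, hfi, Int.fract, Int.fract]
      push_cast
      ring
    rw [this, Int.fract_add_intCast]
  have htne : t ≠ 0 := by
    intro h0
    have hirr : Irrational (((j - i : ℕ) : ℝ) * α) := hα.natCast_mul (by omega)
    rw [ht, hfj, hfi, Int.fract, Int.fract] at h0
    refine hirr.ne_int (⌊(j : ℝ) * α⌋ - ⌊(i : ℝ) * α⌋) ?_
    rw [hdc]
    push_cast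
    push_cast at h0
    linarith
  have htb : -1 < t ∧ t < 1 := by
    have := Int.fract_nonneg ((i : ℝ) * α)
    have := Int.fract_lt_one ((i : ℝ) * α)
    have := Int.fract_nonneg ((j : ℝ) * α)
    have := Int.fract_lt_one ((j : ℝ) * α)
    rw [ht, hfj, hfi]
    constructor <;> linarith
  rcases lt_or_gt_of_ne htne with hneg | hpos
  · right
    have : Int.fract t = t + 1 := by
      rw [← Int.fract_add_intCast t 1]
      push_cast
      exact Int.fract_eq_self.mpr ⟨by linarith [htb.1], by linarith⟩
    rw [hfr, this]
    have : -ε < t := by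
      rw [abs_lt] at hdist; linarith [hdist.1]
    linarith
  · left
    have : Int.fract t = t := Int.fract_eq_self.mpr ⟨le_of_lt hpos, htb.2⟩
    rw [hfr, this]
    rw [abs_lt] at hdist
    linarith [hdist.2]

lemma exists_fract_mem (α : ℝ) (hα : Irrational α) {a b : ℝ}
    (ha : 0 ≤ a) (hab : a < b) (hb : b ≤ 1) :
    ∃ n : ℕ, a < Int.fract (n * α) ∧ Int.fract (n * α) < b := by
  obtain ⟨d, hd0, hd⟩ := exists_fract_small α hα (sub_pos.mpr hab)
  have hirr : Irrational ((d : ℝ) * α) := hα.natCast_mul (by omega)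
  set β := Int.fract ((d : ℝ) * α) with hβ
  have hβ0 : 0 < β := by
    rcases lt_or_eq_of_le (Int.fract_nonneg ((d : ℝ) * α)) with h | h
    · exact h
    · exfalso
      apply hirr.ne_int ⌊(d : ℝ) * α⌋
      have : Int.fract ((d : ℝ) * α) = 0 := h.symm
      rw [Int.fract, sub_eq_zero] at this
      exact this
  have hβ1 : β < 1 := Int.fract_lt_one _
  have hfractmul : ∀ k : ℕ, ∀ x : ℝ, 0 ≤ x → x < 1 →
      (k : ℝ) * ((d : ℝ) * α) = x + (⌊(k:ℝ) * ((d:ℝ)*α)⌋ : ℝ) - (⌊(k:ℝ) * ((d:ℝ)*α)⌋ : ℝ) → True := fun _ _ _ _ _ => trivial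
  rcases hd with hsmall | hbig
  · -- β < b - a
    have hex : ∃ k : ℕ, a < k * β := by
      obtain ⟨k, hk⟩ := exists_nat_gt (a / β)
      exact ⟨k, by rw [div_lt_iff₀ hβ0] at hk; linarith [hk]⟩
    set k₀ := Nat.find hex with hk₀
    have hP : a < k₀ * β := Nat.find_spec hex
    have hk₀pos : 0 < k₀ := by
      rcases Nat.eq_zero_or_pos k₀ with h | h
      · exfalso; rw [h] at hP; simp at hP; linarith
      · exact h
    have hprev : ¬ a < (k₀ - 1 : ℕ) * β := Nat.find_min hex (by omega)
    push_neg at hprev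
    have hcast : ((k₀ - 1 : ℕ) : ℝ) = (k₀ : ℝ) - 1 := by
      push_cast [Nat.cast_sub hk₀pos]; ring
    rw [hcast] at hprev
    have hup : (k₀ : ℝ) * β < b := by nlinarith
    refine ⟨k₀ * d, ?_, ?_⟩
    all_goals {
      have hee : ((k₀ * d : ℕ) : ℝ) * α = (k₀ : ℝ) * β + ((k₀ * ⌊(d : ℝ) * α⌋ : ℤ) : ℝ) := by
        rw [hβ, Int.fract]
        push_cast
        ring
      have : Int.fract (((k₀ * d : ℕ) : ℝ) * α) = (k₀ : ℝ) * β := by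
        rw [hee, Int.fract_add_intCast, Int.fract_eq_self.mpr
          ⟨by positivity, by linarith⟩]
      rw [this]
      first | exact hP | exact hup
    }
  · -- 1 - (b - a) < β
    set γ := 1 - β with hγ
    have hγ0 : 0 < γ := by simp [hγ]; linarith
    have hγs : γ < b - a := by simp [hγ]; linarith
    have hex : ∃ k : ℕ, 1 - b < k * γ := by
      obtain ⟨k, hk⟩ := exists_nat_gt ((1 - b) / γ)
      exact ⟨k, by rw [div_lt_iff₀ hγ0] at hk; linarith [hk]⟩
    set k₀ := Nat.find hex with hk₀
    have hP : 1 - b < k₀ * γ := Nat.find_spec hex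
    have hk₀pos : 0 < k₀ := by
      rcases Nat.eq_zero_or_pos k₀ with h | h
      · exfalso; rw [h] at hP; simp at hP; linarith
      · exact h
    have hprev : ¬ (1 - b) < (k₀ - 1 : ℕ) * γ := Nat.find_min hex (by omega)
    push_neg at hprev
    have hcast : ((k₀ - 1 : ℕ) : ℝ) = (k₀ : ℝ) - 1 := by
      push_cast [Nat.cast_sub hk₀pos]; ring
    rw [hcast] at hprev
    have hup : (k₀ : ℝ) * γ < 1 - a := by nlinarith
    have hlow : 0 < (k₀ : ℝ) * γ := by positivity
    refine ⟨k₀ * d, ?_, ?_⟩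
    all_goals {
      have hee : ((k₀ * d : ℕ) : ℝ) * α
          = (1 - (k₀ : ℝ) * γ) + ((k₀ * ⌊(d : ℝ) * α⌋ + k₀ - 1 : ℤ) : ℝ) := by
        rw [hγ, hβ, Int.fract]
        push_cast
        ring
      have : Int.fract (((k₀ * d : ℕ) : ℝ) * α) = 1 - (k₀ : ℝ) * γ := by
        rw [hee, Int.fract_add_intCast, Int.fract_eq_self.mpr
          ⟨by linarith, by linarith⟩]
      rw [this]
      first | linarith | linarith
    }

open Filter Topology

theorem stmt1 (α : ℝ) (hα : Irrational α) (hα0 : 0 < α) (hα1 : α < 1) :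
    closure {x : ℕ → ℤ | ∃ n : ℕ, x = fun k => sUp α 0 (k + n)} =
      {x : ℕ → ℤ | ∃ ρ ∈ Set.Ico (0 : ℝ) 1, x = sLow α ρ} ∪
      {x : ℕ → ℤ | ∃ ρ ∈ Set.Ico (0 : ℝ) 1, x = sUp α ρ} := by
  set S : Set (ℕ → ℤ) := {x : ℕ → ℤ | ∃ n : ℕ, x = fun k => sUp α 0 (k + n)} with hS
  apply Set.Subset.antisymm
  · -- closure S ⊆ mechanical words
    intro x hx
    -- for each N, an orbit point agreeing with x on first N coordinates
    have key : ∀ N : ℕ, ∃ n : ℕ, ∀ k < N, x k = sUp α (Int.fract (n * α)) k := by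
      intro N
      set U : Set (ℕ → ℤ) := {y : ℕ → ℤ | ∀ k < N, y k = x k} with hU
      have hUopen : IsOpen U := by
        have : U = ⋂ k ∈ Finset.range N, (fun y : ℕ → ℤ => y k) ⁻¹' {x k} := by
          ext y; simp [hU]
        rw [this]
        exact isOpen_biInter_finset fun k _ =>
          (continuous_apply k).isOpen_preimage _ (isOpen_discrete _)
      obtain ⟨y, hyU, hyS⟩ := mem_closure_iff.mp hx U hUopen (fun k _ => rfl)
      obtain ⟨n, rfl⟩ := hyS
      refine ⟨n, fun k hk => ?_⟩
      rw [← hyU k hk]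
      exact congrFun (orbit_eq α n) k
    choose n hn using key
    set ρ : ℕ → ℝ := fun N => Int.fract ((n N : ℝ) * α) with hρ
    have hρmem : ∀ N, ρ N ∈ Set.Icc (0 : ℝ) 1 :=
      fun N => ⟨Int.fract_nonneg _, (Int.fract_lt_one _).le⟩
    have hρlt1 : ∀ N, ρ N < 1 := fun N => Int.fract_lt_one _
    obtain ⟨L, hLmem, φ, hφ, hφt⟩ := isCompact_Icc.tendsto_subseq hρmem
    by_cases hfreq : ∃ᶠ N in atTop, ρ (φ N) ≤ L
    · -- limit from the left : x = sUp
      by_cases hL1 : L < 1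
      · refine Or.inr ⟨L, ⟨hLmem.1, hL1⟩, ?_⟩
        funext k
        obtain ⟨δ, hδ, hδs⟩ := sUp_left α L k
        have hev : ∀ᶠ N in atTop, dist (ρ (φ N)) L < δ ∧ k < N :=
          (Metric.tendsto_nhds.mp hφt δ hδ).and (eventually_gt_atTop k)
        obtain ⟨N, hN1, hN2, hN3⟩ := (hfreq.and_eventually hev).exists
        rw [Real.dist_eq, abs_lt] at hN2
        have hk : k < φ N := lt_of_lt_of_le hN3 (hφ.le_apply)
        rw [hn (φ N) k hk]
        exact hδs (ρ (φ N)) (by linarith [hN2.1]) hN1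
      · -- L = 1 : x = sUp α 0
        have hL : L = 1 := le_antisymm hLmem.2 (not_lt.mp hL1)
        refine Or.inr ⟨0, ⟨le_refl 0, one_pos⟩, ?_⟩
        funext k
        obtain ⟨δ, hδ, hδs⟩ := sUp_left α 0 k
        have hev : ∀ᶠ N in atTop, dist (ρ (φ N)) L < δ ∧ k < N :=
          (Metric.tendsto_nhds.mp hφt δ hδ).and (eventually_gt_atTop k)
        obtain ⟨N, hN2, hN3⟩ := hev.exists
        rw [Real.dist_eq, hL, abs_lt] at hN2
        have hk : k < φ N := lt_of_lt_of_le hN3 (hφ.le_apply)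
        rw [hn (φ N) k hk]
        have h1 : sUp α (ρ (φ N)) k = sUp α ((ρ (φ N) - 1) + ((1 : ℤ) : ℝ)) k := by
          norm_num
        rw [h1, sUp_add_int]
        exact hδs (ρ (φ N) - 1) (by linarith [hN2.1]) (by linarith [hρlt1 (φ N)])
    · -- limit from the right : x = sLow
      rw [Filter.not_frequently] at hfreq
      have hfreq' : ∀ᶠ N in atTop, L < ρ (φ N) := hfreq.mono fun N h => not_le.mp h
      have hL1 : L < 1 := by
        obtain ⟨N, hN⟩ := hfreq'.exists
        exact lt_trans hN (hρlt1 (φ N))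
      refine Or.inl ⟨L, ⟨hLmem.1, hL1⟩, ?_⟩
      funext k
      obtain ⟨δ, hδ, hδs⟩ := sUp_right α L k
      have hev : ∀ᶠ N in atTop, (dist (ρ (φ N)) L < δ ∧ k < N) ∧ L < ρ (φ N) :=
        ((Metric.tendsto_nhds.mp hφt δ hδ).and (eventually_gt_atTop k)).and hfreq'
      obtain ⟨N, ⟨hN2, hN3⟩, hN1⟩ := hev.exists
      rw [Real.dist_eq, abs_lt] at hN2
      have hk : k < φ N := lt_of_lt_of_le hN3 (hφ.le_apply)
      rw [hn (φ N) k hk]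
      exact hδs (ρ (φ N)) hN1 (by linarith [hN2.2])
  · -- mechanical words ⊆ closure S
    rintro x (⟨ρ, ⟨hρ0, hρ1⟩, rfl⟩ | ⟨ρ, ⟨hρ0, hρ1⟩, rfl⟩)
    · -- lower word : approach from the right
      have key : ∀ N : ℕ, ∃ m : ℕ, ∀ k < N, sUp α (Int.fract ((m : ℝ) * α)) k = sLow α ρ k := by
        intro N
        obtain ⟨δ, hδ, hδs⟩ := sUp_right_fin α ρ N
        have hδ' : 0 < min δ (1 - ρ) := lt_min hδ (by linarith)
        obtain ⟨m, hm1, hm2⟩ := exists_fract_mem α hα (a := ρ) (b := ρ + min δ (1 - ρ))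
          hρ0 (by linarith) (by have := min_le_right δ (1 - ρ); linarith)
        exact ⟨m, fun k hk => hδs _ hm1
          (by have := min_le_left δ (1 - ρ); linarith) k hk⟩
      choose m hm using key
      apply mem_closure_of_tendsto (f := fun N => fun k => sUp α 0 (k + m N))
        (b := atTop)
      · refine tendsto_pi_nhds.mpr fun k => ?_
        refine Filter.Tendsto.congr' ?_ (tendsto_const_nhds : Tendsto _ atTop _)
        filter_upwards [eventually_gt_atTop k] with N hk
        rw [congrFun (orbit_eq α (m N)) k, hm N k hk]
      · exact Eventually.of_forall fun N => ⟨m N, rfl⟩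
    · -- upper word : approach from the left
      have key : ∀ N : ℕ, ∃ m : ℕ, ∀ k < N, sUp α (Int.fract ((m : ℝ) * α)) k = sUp α ρ k := by
        intro N
        obtain ⟨δ, hδ, hδs⟩ := sUp_left_fin α ρ N
        rcases eq_or_lt_of_le hρ0 with h0 | h0
        · -- ρ = 0 : wrap around
          subst h0
          obtain ⟨m, hm1, hm2⟩ := exists_fract_mem α hα (a := 1 - min δ 1) (b := 1)
            (by have := min_le_right δ 1; linarith) (by have := lt_min hδ one_pos; linarith)
            le_rfl
          refine ⟨m, fun k hk => ?_⟩
          have h1 : sUp α (Int.fract ((m : ℝ) * α)) k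
              = sUp α ((Int.fract ((m : ℝ) * α) - 1) + ((1 : ℤ) : ℝ)) k := by norm_num
          rw [h1, sUp_add_int]
          exact hδs _ (by have := min_le_left δ 1; linarith) (by linarith) k hk
        · obtain ⟨m, hm1, hm2⟩ := exists_fract_mem α hα (a := ρ - min δ ρ) (b := ρ)
            (by have := min_le_right δ ρ; linarith) (by have := lt_min hδ h0; linarith)
            (by linarith)
          exact ⟨m, fun k hk => hδs _
            (by have := min_le_left δ ρ; linarith) hm2.le k hk⟩
      choose m hm using key
      apply mem_closure_of_tendsto (f := fun N => fun k => sUp α 0 (k + m N))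
        (b := atTop)
      · refine tendsto_pi_nhds.mpr fun k => ?_
        refine Filter.Tendsto.congr' ?_ (tendsto_const_nhds : Tendsto _ atTop _)
        filter_upwards [eventually_gt_atTop k] with N hk
        rw [congrFun (orbit_eq α (m N)) k, hm N k hk]
      · exact Eventually.of_forall fun N => ⟨m N, rfl⟩
end

section
/- Let α ∈ (0,1) be irrational. Then for every ρ with 0 < ρ < 1, the lower mechanical word s_{α,ρ} satisfies s_{α,0} < s_{α,ρ} < s'_{α,0} in the lexicographic order (i.e., 0c_α < s_{α,ρ} < 1c_α). -/
/-- Strict lexicographic order on infinite words. -/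
def LexLt {A : Type*} [LT A] (x y : ℕ → A) : Prop :=
  ∃ m : ℕ, (∀ i, i < m → x i = y i) ∧ x m < y m

private lemma lex_of_partial (F G : ℕ → ℤ) (h0 : F 0 = G 0) (hle : ∀ n, F n ≤ G n)
    (hex : ∃ n, F n < G n) :
    LexLt (fun n => F (n + 1) - F n) (fun n => G (n + 1) - G n) := by
  classical
  set n := Nat.find hex with hn
  have hn0 : n ≠ 0 := by
    intro h
    have := Nat.find_spec hex
    rw [← hn, h] at this
    omega
  have heq : ∀ i, i < n → F i = G i := fun i hi =>
    le_antisymm (hle i) (not_lt.mp (Nat.find_min hex hi))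
  obtain ⟨m, hm⟩ : ∃ m, n = m + 1 := ⟨n - 1, by omega⟩
  refine ⟨m, fun i hi => ?_, ?_⟩
  · simp only [heq i (by omega), heq (i + 1) (by omega)]
  · have h1 : F (m + 1) < G (m + 1) := by rw [← hm]; exact Nat.find_spec hex
    have h2 : F m = G m := heq m (by omega)
    simp only
    omega

private lemma kchoice (t c : ℝ) (ht : 0 < t) (hc : 0 ≤ c) :
    ∃ k : ℕ, 1 ≤ k ∧ c < k * t ∧ (k : ℝ) * t ≤ c + t := by
  refine ⟨⌊c / t⌋₊ + 1, by omega, ?_, ?_⟩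
  · have := Nat.lt_floor_add_one (c / t)
    push_cast
    rw [div_lt_iff₀ ht] at this
    linarith
  · have h := Nat.floor_le (a := c / t) (by positivity)
    have h2 : (⌊c / t⌋₊ : ℝ) * t ≤ c := by
      rw [← le_div_iff₀ ht]
      exact h
    push_cast
    linarith

/-- Density of natural multiples of an irrational in `[0,1]`. -/
private lemma dens (α : ℝ) (hα : Irrational α) (a b : ℝ) (ha : 0 ≤ a) (hb : b ≤ 1)
    (hab : a < b) : ∃ N : ℕ, 1 ≤ N ∧ a < Int.fract (α * N) ∧ Int.fract (α * N) < b := by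
  set S := AddSubgroup.closure ({α, (1 : ℝ)} : Set ℝ) with hS
  have hd : Dense (S : Set ℝ) := by
    rcases S.dense_or_cyclic with hd | ⟨g, hg⟩
    · exact hd
    · exfalso
      have hαS : α ∈ S := AddSubgroup.subset_closure (by simp)
      have h1S : (1 : ℝ) ∈ S := AddSubgroup.subset_closure (by simp)
      rw [hg, AddSubgroup.mem_closure_singleton] at hαS h1S
      obtain ⟨z, hz⟩ := hαS
      obtain ⟨w, hw⟩ := h1S
      have hw0 : w ≠ 0 := by rintro rfl; simp at hw
      have hwR : (w : ℝ) ≠ 0 := Int.cast_ne_zero.mpr hw0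
      rw [zsmul_eq_mul] at hz hw
      have hαzw : α = (z : ℝ) / (w : ℝ) := by
        rw [eq_div_iff hwR, ← hz]
        calc (z : ℝ) * g * w = z * (w * g) := by ring
        _ = z := by rw [hw, mul_one]
      exact hα ⟨(z : ℚ) / (w : ℚ), by rw [hαzw]; push_cast; ring⟩
  have hε : (0 : ℝ) < b - a := by linarith
  -- find a small positive element of the subgroup
  obtain ⟨s, hsI, hsS⟩ : ∃ s, s ∈ Set.Ioo (0 : ℝ) (b - a) ∧ s ∈ (S : Set ℝ) := by
    have hmem : (b - a) / 2 ∈ closure (S : Set ℝ) := hd _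
    have := (mem_closure_iff.mp hmem) (Set.Ioo 0 (b - a)) isOpen_Ioo
      ⟨by linarith, by linarith⟩
    obtain ⟨s, h1, h2⟩ := this
    exact ⟨s, h1, h2⟩
  obtain ⟨m, q, hmq⟩ := AddSubgroup.mem_closure_pair.mp hsS
  rw [zsmul_eq_mul, zsmul_eq_mul, mul_one] at hmq
  obtain ⟨hs0, hsε⟩ := hsI
  have hm0 : m ≠ 0 := by
    rintro rfl
    rw [Int.cast_zero, zero_mul, zero_add] at hmq
    have h1 : (0 : ℝ) < q := hmq ▸ hs0
    have h2 : (q : ℝ) < 1 := by linarith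
    have h1' : (0 : ℤ) < q := by exact_mod_cast h1
    have h2' : q < (1 : ℤ) := by exact_mod_cast h2
    omega
  rcases lt_or_gt_of_ne hm0 with hmneg | hmpos
  · -- m < 0 : α * (-m) = q - s
    set p := (-m).toNat with hp
    have hp1 : 1 ≤ p := by omega
    have hpα : α * p = q - s := by
      have hpz : (p : ℤ) = -m := Int.toNat_of_nonneg (by omega)
      have : ((p : ℕ) : ℝ) = -(m : ℝ) := by
        rw [show ((p : ℕ) : ℝ) = ((p : ℤ) : ℝ) by push_cast; ring, hpz]; push_cast; ring
      rw [this]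
      linarith [hmq]
    obtain ⟨k, hk1, hkl, hku⟩ := kchoice s (1 - b) hs0 (by linarith)
    refine ⟨k * p, Nat.one_le_iff_ne_zero.mpr (Nat.mul_ne_zero (by omega) (by omega)), ?_, ?_⟩
    all_goals
      have hNα : α * (k * p : ℕ) = (k : ℝ) * q - k * s := by
        push_cast; rw [show α * ((k : ℝ) * p) = (k : ℝ) * (α * p) by ring, hpα]; ring
      have hks0 : (0 : ℝ) < k * s := by
        have : (1 : ℝ) ≤ k := by exact_mod_cast hk1
        nlinarith
      have hks1 : (k : ℝ) * s < 1 := by linarith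
      have hfr : Int.fract (α * ((k * p : ℕ) : ℝ)) = 1 - k * s := by
        rw [hNα, show (k : ℝ) * q - k * s = -(k * s) + (k * q : ℤ) by push_cast; ring,
          Int.fract_add_intCast, Int.fract_neg, Int.fract_eq_self.mpr ⟨le_of_lt hks0, hks1⟩]
        rw [Int.fract_eq_self.mpr ⟨le_of_lt hks0, hks1⟩]
        exact ne_of_gt hks0
      rw [hfr]
    · linarith
    · linarith
  · -- m > 0 : α * m = s - q
    set p := m.toNat with hp
    have hp1 : 1 ≤ p := by omega
    have hpα : α * p = s - q := by
      have hpz : (p : ℤ) = m := Int.toNat_of_nonneg (by omega)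
      have : ((p : ℕ) : ℝ) = (m : ℝ) := by
        rw [show ((p : ℕ) : ℝ) = ((p : ℤ) : ℝ) by push_cast; ring, hpz]
      rw [this]; linarith [hmq]
    obtain ⟨k, hk1, hkl, hku⟩ := kchoice s a hs0 ha
    refine ⟨k * p, Nat.one_le_iff_ne_zero.mpr (Nat.mul_ne_zero (by omega) (by omega)), ?_, ?_⟩
    all_goals
      have hNα : α * (k * p : ℕ) = (k : ℝ) * s - k * q := by
        push_cast; rw [show α * ((k : ℝ) * p) = (k : ℝ) * (α * p) by ring, hpα]; ring
      have hks0 : (0 : ℝ) ≤ k * s := by positivity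
      have hks1 : (k : ℝ) * s < 1 := by linarith
      have hfr : Int.fract (α * ((k * p : ℕ) : ℝ)) = k * s := by
        rw [hNα, show (k : ℝ) * s - k * q = (k : ℝ) * s - ((k * q : ℤ) : ℝ) by push_cast; ring,
          Int.fract_sub_intCast, Int.fract_eq_self.mpr ⟨hks0, hks1⟩]
      rw [hfr]
    · linarith
    · linarith

theorem stmt3 (α : ℝ) (hα : Irrational α) (hα0 : 0 < α) (hα1 : α < 1)
    (ρ : ℝ) (hρ0 : 0 < ρ) (hρ1 : ρ < 1) :
    LexLt (sLow α 0) (sLow α ρ) ∧ LexLt (sLow α ρ) (sUp α 0) := by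
  have hirr : ∀ n : ℕ, 1 ≤ n → Irrational (α * n) := by
    intro n hn
    have := hα.natCast_mul (m := n) (by omega)
    rwa [mul_comm] at this
  have hceil : ∀ n : ℕ, 1 ≤ n → ⌈α * n⌉ = ⌊α * n⌋ + 1 := by
    intro n hn
    have hni := (hirr n hn).ne_int
    refine le_antisymm (Int.ceil_le.mpr ?_) ?_
    · push_cast
      have := Int.lt_floor_add_one (α * n)
      linarith
    · have h1 : (⌊α * n⌋ : ℝ) < α * n := lt_of_le_of_ne (Int.floor_le _) (fun h => hni _ h.symm)
      have := Int.le_ceil (α * n)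
      have : (⌊α * n⌋ : ℝ) < ⌈α * n⌉ := lt_of_lt_of_le h1 this
      exact_mod_cast Int.add_one_le_of_lt (by exact_mod_cast this)
  constructor
  · -- 0c_α < s_{α,ρ}
    have key := lex_of_partial (fun n => ⌊α * n⌋) (fun n => ⌊α * n + ρ⌋)
      (by
        show ⌊α * ((0 : ℕ) : ℝ)⌋ = ⌊α * ((0 : ℕ) : ℝ) + ρ⌋
        have h0ρ : ⌊ρ⌋ = 0 := Int.floor_eq_zero_iff.mpr ⟨le_of_lt hρ0, hρ1⟩
        norm_num [h0ρ])
      (fun n => Int.floor_mono (by linarith))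
      (by
        obtain ⟨N, hN1, hNa, hNb⟩ := dens α hα (1 - ρ) 1 (by linarith) le_rfl (by linarith)
        refine ⟨N, ?_⟩
        show ⌊α * (N : ℕ)⌋ < ⌊α * (N : ℕ) + ρ⌋
        have hfr : α * N - ⌊α * N⌋ > 1 - ρ := hNa
        have : ((⌊α * N⌋ + 1 : ℤ) : ℝ) ≤ α * N + ρ := by push_cast; linarith
        have := Int.le_floor.mpr this
        omega)
    obtain ⟨m, hm1, hm2⟩ := key
    refine ⟨m, fun i hi => ?_, ?_⟩
    · have := hm1 i hi
      simp only [sLow, add_zero]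
      simp only at this
      push_cast at this ⊢
      omega
    · simp only [sLow, add_zero]
      simp only at hm2
      push_cast at hm2 ⊢
      omega
  · -- s_{α,ρ} < 1c_α
    have key := lex_of_partial (fun n => ⌊α * n + ρ⌋) (fun n => ⌈α * n⌉)
      (by
        show ⌊α * ((0 : ℕ) : ℝ) + ρ⌋ = ⌈α * ((0 : ℕ) : ℝ)⌉
        have h0ρ : ⌊ρ⌋ = 0 := Int.floor_eq_zero_iff.mpr ⟨le_of_lt hρ0, hρ1⟩
        norm_num [h0ρ])
      (by
        intro n
        show ⌊α * (n : ℕ) + ρ⌋ ≤ ⌈α * (n : ℕ)⌉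
        rcases Nat.eq_zero_or_pos n with rfl | hn
        · have h0ρ : ⌊ρ⌋ = 0 := Int.floor_eq_zero_iff.mpr ⟨le_of_lt hρ0, hρ1⟩
          norm_num [h0ρ]
        · rw [hceil n hn]
          have : α * n + ρ < (⌊α * n⌋ : ℝ) + 1 + 1 := by
            have := Int.lt_floor_add_one (α * n)
            linarith
          have := Int.floor_mono (le_of_lt this)
          have h2 : ⌊(⌊α * n⌋ : ℝ) + 1 + 1⌋ = ⌊α * n⌋ + 2 := by
            rw [show (⌊α * n⌋ : ℝ) + 1 + 1 = ((⌊α * n⌋ + 2 : ℤ) : ℝ) by push_cast; ring,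
              Int.floor_intCast]
          rw [h2] at this
          have hlt : ⌊α * n + ρ⌋ < ⌊α * n⌋ + 2 := by
            have : α * n + ρ < (⌊α * n⌋ : ℝ) + 2 := by
              have := Int.lt_floor_add_one (α * n); linarith
            have := Int.floor_le_floor (le_of_lt this)
            by_contra h
            push_neg at h
            have h3 : ((⌊α * n⌋ + 2 : ℤ) : ℝ) ≤ α * n + ρ := by
              calc ((⌊α * n⌋ + 2 : ℤ) : ℝ) ≤ (⌊α * n + ρ⌋ : ℝ) := by exact_mod_cast h
              _ ≤ α * n + ρ := Int.floor_le _
            push_cast at h3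
            have := Int.lt_floor_add_one (α * n)
            linarith
          omega)
      (by
        obtain ⟨N, hN1, hNa, hNb⟩ := dens α hα 0 (1 - ρ) le_rfl (by linarith) (by linarith)
        refine ⟨N, ?_⟩
        show ⌊α * (N : ℕ) + ρ⌋ < ⌈α * (N : ℕ)⌉
        rw [hceil N hN1]
        have hfr : α * N - ⌊α * N⌋ < 1 - ρ := hNb
        have : ⌊α * N + ρ⌋ < ⌊α * N⌋ + 1 := by
          rw [Int.floor_lt]
          push_cast
          linarith
        omega)
    obtain ⟨m, hm1, hm2⟩ := key
    refine ⟨m, fun i hi => ?_, ?_⟩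
    · have := hm1 i hi
      simp only [sLow, sUp, add_zero]
      simp only at this
      push_cast at this ⊢
      omega
    · simp only [sLow, sUp, add_zero]
      simp only at hm2
      push_cast at hm2 ⊢
      omega
end

section
/- Let α ∈ (0,1) be irrational. Then for every integer n ≥ 1, σ^n(s'_{α,0}) < s'_{α,0} and s_{α,0} < σ^n(s_{α,0}) in the lexicographic order; that is, 1c_α strictly dominates all of its shifts and 0c_α is strictly dominated by all of its shifts. -/
/-- Stepping by `δ` hits any window of width `ε > δ`. -/
lemma step_hit {δ ε a : ℝ} (hδ : 0 < δ) (hδε : δ < ε) (ha : 0 ≤ a) :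
    ∃ j : ℕ, 1 ≤ j ∧ a < (j : ℝ) * δ ∧ (j : ℝ) * δ < a + ε := by
  refine ⟨⌊a / δ⌋₊ + 1, Nat.le_add_left _ _, ?_, ?_⟩
  · have h := Nat.lt_floor_add_one (a / δ)
    have := (div_lt_iff₀ hδ).mp h
    push_cast
    linarith
  · have h := Nat.floor_le (div_nonneg ha hδ.le)
    have h2 : (⌊a / δ⌋₊ : ℝ) * δ ≤ a := by
      have := mul_le_mul_of_nonneg_right h hδ.le
      rwa [div_mul_cancel₀ a hδ.ne'] at this
    push_cast
    linarith

lemma fract_nat_mul (j : ℕ) (x : ℝ) :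
    Int.fract ((j : ℝ) * x) = Int.fract ((j : ℝ) * Int.fract x) := by
  have h : (j : ℝ) * x = (j : ℝ) * Int.fract x + ((j * ⌊x⌋ : ℤ) : ℝ) := by
    rw [Int.fract]
    push_cast
    ring
  rw [h, Int.fract_add_intCast]

/-- Density of the fractional parts of natural multiples of an irrational. -/
lemma exists_fract_btwn (α : ℝ) (hα : Irrational α) {c d : ℝ}
    (h0 : 0 ≤ c) (hcd : c < d) (hd : d ≤ 1) :
    ∃ m : ℕ, 1 ≤ m ∧ c < Int.fract (α * m) ∧ Int.fract (α * m) < d := by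
  -- the subgroup ℤα + ℤ is dense
  set S : AddSubgroup ℝ := AddSubgroup.zmultiples α ⊔ AddSubgroup.zmultiples (1 : ℝ) with hS
  have hdense : Dense (S : Set ℝ) := by
    rcases AddSubgroup.dense_or_cyclic S with h | ⟨a, ha⟩
    · exact h
    · exfalso
      have h1 : (1 : ℝ) ∈ S := by
        exact AddSubgroup.mem_sup_right (AddSubgroup.mem_zmultiples 1)
      have hαS : α ∈ S := AddSubgroup.mem_sup_left (AddSubgroup.mem_zmultiples α)
      rw [ha] at h1 hαS
      rw [AddSubgroup.mem_closure_singleton] at h1 hαS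
      obtain ⟨p, hp⟩ := h1
      obtain ⟨q, hq⟩ := hαS
      have hp0 : p ≠ 0 := by
        rintro rfl; simp at hp
      have ha0 : a = 1 / p := by
        field_simp
        rw [← hp]
        push_cast [zsmul_eq_mul]
        ring
      apply hα
      refine ⟨(q : ℚ) / (p : ℚ), ?_⟩
      rw [← hq, ha0, zsmul_eq_mul]
      push_cast
      field_simp
  set ε : ℝ := min (d - c) 1 with hε
  have hε0 : 0 < ε := lt_min (by linarith) one_pos
  -- find a small positive element of S
  obtain ⟨g, hgS, hg0, hgε⟩ := hdense.exists_between hε0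
  have hgS' : g ∈ AddSubgroup.zmultiples α ⊔ AddSubgroup.zmultiples (1:ℝ) := hgS
  rw [AddSubgroup.mem_sup] at hgS'
  obtain ⟨y, hy, z, hz, hyz⟩ := hgS'
  obtain ⟨p, rfl⟩ := AddSubgroup.mem_zmultiples_iff.mp hy
  obtain ⟨q, rfl⟩ := AddSubgroup.mem_zmultiples_iff.mp hz
  rw [zsmul_eq_mul, zsmul_eq_mul, mul_one] at hyz
  have hg1 : g < 1 := lt_of_lt_of_le hgε (min_le_right _ _)
  have hgdc : g < d - c := lt_of_lt_of_le hgε (min_le_left _ _)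
  have hp0 : p ≠ 0 := by
    rintro rfl
    rw [Int.cast_zero, zero_mul, zero_add] at hyz
    subst hyz
    exact absurd hg0 (by
      rcases lt_trichotomy q 0 with h | h | h
      · push_neg
        exact_mod_cast le_of_lt (by exact_mod_cast Int.cast_lt_zero.mpr h)
      · subst h; simp
      · exact absurd hg1 (by push_neg; exact_mod_cast h))
  have hfg : Int.fract ((p : ℝ) * α) = g := by
    have : (p : ℝ) * α = g + ((-q : ℤ) : ℝ) := by push_cast; linarith
    rw [this, Int.fract_add_intCast, Int.fract_eq_self.mpr ⟨hg0.le, hg1⟩]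
  -- produce m₁ : ℕ with fract (α * m₁) ∈ (0, d-c) ∪ (1-(d-c), 1)
  have key : ∃ m₁ : ℕ, 1 ≤ m₁ ∧
      ((0 < Int.fract (α * m₁) ∧ Int.fract (α * m₁) < d - c) ∨
       (1 - (d - c) < Int.fract (α * m₁) ∧ Int.fract (α * m₁) < 1)) := by
    rcases lt_trichotomy p 0 with hp | hp | hp
    · refine ⟨(-p).toNat, ?_, Or.inr ?_⟩
      · omega
      · have hcast : ((((-p).toNat : ℕ)) : ℝ) = -(p : ℝ) := by
          have h := Int.toNat_of_nonneg (by omega : 0 ≤ -p)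
          exact_mod_cast congrArg (Int.cast : ℤ → ℝ) h
        have : α * ((-p).toNat : ℕ) = -((p : ℝ) * α) := by rw [hcast]; ring
        rw [this, Int.fract_neg (by rw [hfg]; exact hg0.ne'), hfg]
        constructor <;> linarith
    · exact absurd hp hp0
    · refine ⟨p.toNat, ?_, Or.inl ?_⟩
      · omega
      · have hcast : ((p.toNat : ℕ) : ℝ) = (p : ℝ) := by
          exact_mod_cast congrArg (Int.cast : ℤ → ℝ) (Int.toNat_of_nonneg hp.le)
        have : α * (p.toNat : ℕ) = (p : ℝ) * α := by rw [hcast]; ring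
        rw [this, hfg]
        constructor <;> linarith
  obtain ⟨m₁, hm₁, hcase⟩ := key
  rcases hcase with ⟨hδ0, hδdc⟩ | ⟨hδ1, hδ2⟩
  · -- small step upward
    set δ := Int.fract (α * m₁) with hδ
    obtain ⟨j, hj1, hja, hjb⟩ := step_hit hδ0 hδdc h0
    refine ⟨j * m₁, Nat.one_le_iff_ne_zero.mpr (by positivity), ?_, ?_⟩ <;>
    · have e : α * ((j * m₁ : ℕ) : ℝ) = (j : ℝ) * (α * m₁) := by push_cast; ring
      rw [e, fract_nat_mul, ← hδ,
        Int.fract_eq_self.mpr ⟨by positivity, by linarith⟩]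
      linarith
  · -- small step downward
    set δ := 1 - Int.fract (α * m₁) with hδ
    have hδ0 : 0 < δ := by linarith
    have hδdc : δ < d - c := by linarith
    obtain ⟨j, hj1, hja, hjb⟩ := step_hit hδ0 hδdc (by linarith : (0:ℝ) ≤ 1 - d)
    have hjδ1 : (j : ℝ) * δ < 1 := by linarith
    have hjδ0 : 0 < (j : ℝ) * δ := lt_of_le_of_lt (by linarith) hja
    refine ⟨j * m₁, Nat.one_le_iff_ne_zero.mpr (by positivity), ?_, ?_⟩ <;>
    · have e : α * ((j * m₁ : ℕ) : ℝ) = (j : ℝ) * (α * m₁) := by push_cast; ring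
      have e2 : (j : ℝ) * Int.fract (α * m₁) = -((j : ℝ) * δ) + ((j : ℤ) : ℝ) := by
        push_cast; rw [hδ]; ring
      rw [e, fract_nat_mul, e2, Int.fract_add_intCast,
        Int.fract_neg (by rw [Int.fract_eq_self.mpr ⟨hjδ0.le, hjδ1⟩]; exact hjδ0.ne'),
        Int.fract_eq_self.mpr ⟨hjδ0.le, hjδ1⟩]
      linarith

lemma ceil_of_irrational {x : ℝ} (hx : Irrational x) : ⌈x⌉ = ⌊x⌋ + 1 := by
  have h1 : (⌊x⌋ : ℝ) < x := lt_of_le_of_ne (Int.floor_le x) (Ne.symm (hx.ne_int _))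
  have h2 : x ≤ (⌊x⌋ : ℝ) + 1 := (Int.lt_floor_add_one x).le
  have := Int.ceil_le.mpr (by exact_mod_cast h2 : x ≤ ((⌊x⌋ + 1 : ℤ) : ℝ))
  have h3 : ⌊x⌋ < ⌈x⌉ := by
    by_contra h
    push_neg at h
    have := Int.le_ceil x
    have : x ≤ (⌊x⌋ : ℝ) := le_trans (Int.le_ceil x) (by exact_mod_cast h)
    linarith
  omega

theorem stmt4 (α : ℝ) (hα : Irrational α) (hα0 : 0 < α) (hα1 : α < 1) :
    ∀ n : ℕ, 1 ≤ n →
      LexLt (fun k => sUp α 0 (k + n)) (sUp α 0) ∧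
      LexLt (sLow α 0) (fun k => sLow α 0 (k + n)) := by
  intro n hn
  classical
  set β := α * n with hβ
  have hirr : ∀ m : ℕ, 1 ≤ m → Irrational (α * m) := by
    intro m hm
    rw [mul_comm]
    exact hα.natCast_mul (by omega)
  have hβirr : Irrational β := hirr n hn
  set t := Int.fract β with ht
  have ht0 : 0 < t := by
    rw [ht, Int.fract_pos]
    exact hβirr.ne_int _
  have ht1 : t < 1 := Int.fract_lt_one β
  -- sum-carry functions
  set F : ℕ → ℤ := fun m => ⌊α * m + β⌋ - ⌊β⌋ - ⌊α * m⌋ with hF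
  set G : ℕ → ℤ := fun m => ⌈α * m⌉ + ⌈β⌉ - ⌈α * m + β⌉ with hG
  have floor_bounds : ∀ x y : ℝ, ⌊x⌋ + ⌊y⌋ ≤ ⌊x + y⌋ ∧ ⌊x + y⌋ ≤ ⌊x⌋ + ⌊y⌋ + 1 := by
    intro x y
    constructor
    · refine Int.le_floor.mpr ?_
      push_cast
      exact add_le_add (Int.floor_le x) (Int.floor_le y)
    · have := Int.le_floor_add_floor x y
      omega
  have hF01 : ∀ m, F m = 0 ∨ F m = 1 := by
    intro m
    obtain ⟨h1, h2⟩ := floor_bounds (α * m) β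
    simp only [hF]
    omega
  have hG01 : ∀ m, G m = 0 ∨ G m = 1 := by
    intro m
    have h1 : ⌈α * m + β⌉ ≤ ⌈α * m⌉ + ⌈β⌉ := Int.ceil_add_le _ _
    have h2 : ⌈α * m⌉ + ⌈β⌉ ≤ ⌈α * m + β⌉ + 1 := by
      have a1 : (⌈α * m⌉ : ℝ) < α * m + 1 := Int.ceil_lt_add_one _
      have a2 : (⌈β⌉ : ℝ) < β + 1 := Int.ceil_lt_add_one _
      have a3 : α * m + β ≤ (⌈α * m + β⌉ : ℝ) := Int.le_ceil _
      have : (⌈α * m⌉ : ℝ) + ⌈β⌉ < (⌈α * m + β⌉ : ℝ) + 2 := by linarith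
      have hi : ⌈α * m⌉ + ⌈β⌉ < ⌈α * m + β⌉ + 2 := by exact_mod_cast this
      omega
    simp only [hG]
    omega
  have hF0 : F 0 = 0 := by
    simp only [hF, Nat.cast_zero, mul_zero, zero_add, Int.floor_zero]
    omega
  have hG0 : G 0 = 0 := by
    simp only [hG, Nat.cast_zero, mul_zero, zero_add, Int.ceil_zero]
    omega
  -- difference formulas
  have hLowDiff : ∀ k : ℕ, sLow α 0 (k + n) - sLow α 0 k = F (k + 1) - F k := by
    intro k
    simp only [sLow, hF, add_zero]
    rw [show α * (((k + n : ℕ) : ℝ) + 1) = α * ((k + 1 : ℕ) : ℝ) + β by push_cast; ring,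
        show α * ((k + n : ℕ) : ℝ) = α * (k : ℕ) + β by push_cast; ring,
        show α * ((k : ℕ) + 1) = α * ((k + 1 : ℕ) : ℝ) by push_cast; ring]
    ring
  have hUpDiff : ∀ k : ℕ, sUp α 0 (k + n) - sUp α 0 k = -(G (k + 1) - G k) := by
    intro k
    simp only [sUp, hG, add_zero]
    rw [show α * (((k + n : ℕ) : ℝ) + 1) = α * ((k + 1 : ℕ) : ℝ) + β by push_cast; ring,
        show α * ((k + n : ℕ) : ℝ) = α * (k : ℕ) + β by push_cast; ring,
        show α * ((k : ℕ) + 1) = α * ((k + 1 : ℕ) : ℝ) by push_cast; ring]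
    ring
  -- existence of a carry for F
  have hFM : ∃ M : ℕ, F M = 1 := by
    obtain ⟨M, hM1, hMa, hMb⟩ := exists_fract_btwn α hα (by linarith : (0:ℝ) ≤ 1 - t)
      (by linarith : 1 - t < 1) le_rfl
    refine ⟨M, ?_⟩
    have hfl : ⌊α * M + β⌋ = ⌊α * M⌋ + ⌊β⌋ + 1 := by
      have e1 : α * M = (⌊α * M⌋ : ℝ) + Int.fract (α * M) := (Int.floor_add_fract _).symm
      have e2 : β = (⌊β⌋ : ℝ) + t := (Int.floor_add_fract _).symm
      have hfr1 : Int.fract (α * M) < 1 := Int.fract_lt_one _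
      rw [Int.floor_eq_iff]
      constructor
      · push_cast; linarith
      · push_cast; linarith
    simp only [hF]
    omega
  -- existence of a carry for G
  have hGM : ∃ M : ℕ, G M = 1 := by
    obtain ⟨M, hM1, hMa, hMb⟩ := exists_fract_btwn α hα (le_refl (0:ℝ))
      (by linarith : (0:ℝ) < 1 - t) (by linarith)
    refine ⟨M, ?_⟩
    have hMirr : Irrational (α * M) := hirr M hM1
    have hMβirr : Irrational (α * M + β) := by
      have : α * M + β = α * ((M + n : ℕ) : ℝ) := by push_cast; ring
      rw [this]
      exact hirr _ (by omega)
    have hfl : ⌊α * M + β⌋ = ⌊α * M⌋ + ⌊β⌋ := by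
      have e1 : α * M = (⌊α * M⌋ : ℝ) + Int.fract (α * M) := (Int.floor_add_fract _).symm
      have e2 : β = (⌊β⌋ : ℝ) + t := (Int.floor_add_fract _).symm
      have hfr0 : 0 ≤ Int.fract (α * M) := Int.fract_nonneg _
      rw [Int.floor_eq_iff]
      constructor
      · push_cast; linarith
      · push_cast; linarith
    simp only [hG]
    rw [ceil_of_irrational hMirr, ceil_of_irrational hβirr, ceil_of_irrational hMβirr, hfl]
    ring
  constructor
  · -- upper word: shifted < original
    have hex : ∃ m, G (m + 1) = 1 := by
      obtain ⟨M, hM⟩ := hGM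
      rcases Nat.eq_zero_or_pos M with rfl | hMpos
      · rw [hG0] at hM; omega
      · exact ⟨M - 1, by rw [Nat.sub_add_cancel hMpos]; exact hM⟩
    set m₀ := Nat.find hex with hm₀
    have hfind : G (m₀ + 1) = 1 := Nat.find_spec hex
    have hbefore : ∀ i, i < m₀ → G (i + 1) = 0 := by
      intro i hi
      rcases hG01 (i + 1) with h | h
      · exact h
      · exact absurd h (Nat.find_min hex hi)
    have hzero : ∀ i, i ≤ m₀ → G i = 0 := by
      intro i
      induction i with
      | zero => intro _; exact hG0
      | succ k ih => intro hk; exact hbefore k (by omega)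
    refine ⟨m₀, ?_, ?_⟩
    · intro i hi
      have h1 := hUpDiff i
      have h2 := hzero i (by omega)
      have h3 := hbefore i hi
      simp only at h1 ⊢
      omega
    · have h1 := hUpDiff m₀
      have h2 := hzero m₀ le_rfl
      simp only at h1 ⊢
      omega
  · -- lower word: original < shifted
    have hex : ∃ m, F (m + 1) = 1 := by
      obtain ⟨M, hM⟩ := hFM
      rcases Nat.eq_zero_or_pos M with rfl | hMpos
      · rw [hF0] at hM; omega
      · exact ⟨M - 1, by rw [Nat.sub_add_cancel hMpos]; exact hM⟩
    set m₀ := Nat.find hex with hm₀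
    have hfind : F (m₀ + 1) = 1 := Nat.find_spec hex
    have hbefore : ∀ i, i < m₀ → F (i + 1) = 0 := by
      intro i hi
      rcases hF01 (i + 1) with h | h
      · exact h
      · exact absurd h (Nat.find_min hex hi)
    have hzero : ∀ i, i ≤ m₀ → F i = 0 := by
      intro i
      induction i with
      | zero => intro _; exact hF0
      | succ k ih => intro hk; exact hbefore k (by omega)
    refine ⟨m₀, ?_, ?_⟩
    · intro i hi
      have h1 := hLowDiff i
      have h2 := hzero i (by omega)
      have h3 := hbefore i hi
      simp only at h1 ⊢
      omega
    · have h1 := hLowDiff m₀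
      have h2 := hzero m₀ le_rfl
      simp only at h1 ⊢
      omega
end

section
/- Let α and β be irrational numbers in (0,1). Then c_α < c_β in the lexicographic order if and only if α < β, where c_α ∈ {0,1}^ℕ is the characteristic word c_α(n) = ⌊α(n+2)⌋ − ⌊α(n+1)⌋. -/
/-- Characteristic word of slope `α`. -/
noncomputable def charWord (α : ℝ) (n : ℕ) : ℤ := ⌊α * (n + 2)⌋ - ⌊α * (n + 1)⌋

private lemma lexlt_asymm {x y : ℕ → ℤ} (h1 : LexLt x y) (h2 : LexLt y x) : False := by
  obtain ⟨m1, e1, l1⟩ := h1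
  obtain ⟨m2, e2, l2⟩ := h2
  rcases lt_trichotomy m1 m2 with h | h | h
  · have := e2 m1 h; omega
  · subst h; omega
  · have := e1 m2 h; omega

private lemma lex_of_lt (α β : ℝ) (hα0 : 0 < α) (hβ1 : β < 1) (h : α < β) :
    LexLt (charWord α) (charWord β) := by
  classical
  have hmono : ∀ n : ℕ, ⌊α * n⌋ ≤ ⌊β * n⌋ := fun n =>
    Int.floor_le_floor (mul_le_mul_of_nonneg_right h.le (Nat.cast_nonneg n))
  have hex : ∃ n : ℕ, ⌊α * n⌋ < ⌊β * n⌋ := by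
    obtain ⟨n, hn⟩ := exists_nat_gt (1 / (β - α))
    refine ⟨n, ?_⟩
    have hd : 0 < β - α := by linarith
    have h1 : 1 < (n : ℝ) * (β - α) := by
      rw [div_lt_iff₀ hd] at hn; linarith
    have hle : α * n + 1 ≤ β * n := by nlinarith
    calc ⌊α * n⌋ < ⌊α * n⌋ + 1 := by omega
      _ = ⌊α * (n : ℝ) + 1⌋ := by
          rw [Int.floor_add_one]
      _ ≤ ⌊β * n⌋ := Int.floor_le_floor hle
  set k := Nat.find hex with hkdef
  have hkspec : ⌊α * k⌋ < ⌊β * k⌋ := Nat.find_spec hex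
  have hmin : ∀ j < k, ⌊α * (j : ℕ)⌋ = ⌊β * (j : ℕ)⌋ := fun j hj =>
    le_antisymm (hmono j) (not_lt.mp (Nat.find_min hex hj))
  have hk2 : 2 ≤ k := by
    by_contra hlt
    push_neg at hlt
    interval_cases k
    · simp at hkspec
    · have h1 : ⌊α * ((1 : ℕ) : ℝ)⌋ = 0 := by
        rw [Int.floor_eq_zero_iff]
        constructor <;> simp <;> nlinarith
      have h2 : ⌊β * ((1 : ℕ) : ℝ)⌋ = 0 := by
        rw [Int.floor_eq_zero_iff]
        constructor <;> simp <;> nlinarith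
      omega
  refine ⟨k - 2, ?_, ?_⟩
  · intro i hi
    have e1 : ⌊α * ((i : ℝ) + 1)⌋ = ⌊β * ((i : ℝ) + 1)⌋ := by
      have := hmin (i + 1) (by omega)
      push_cast at this ⊢
      convert this using 2
    have e2 : ⌊α * ((i : ℝ) + 2)⌋ = ⌊β * ((i : ℝ) + 2)⌋ := by
      have := hmin (i + 2) (by omega)
      push_cast at this ⊢
      convert this using 2
    simp [charWord, e1, e2]
  · have e1 : ⌊α * (((k - 2 : ℕ) : ℝ) + 1)⌋ = ⌊β * (((k - 2 : ℕ) : ℝ) + 1)⌋ := by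
      have := hmin (k - 1) (by omega)
      have hc : (((k - 2 : ℕ) : ℝ) + 1) = ((k - 1 : ℕ) : ℝ) := by
        push_cast [Nat.cast_sub (by omega : 2 ≤ k), Nat.cast_sub (by omega : 1 ≤ k)]
        ring
      rw [hc]; exact this
    have e2 : ⌊α * (((k - 2 : ℕ) : ℝ) + 2)⌋ < ⌊β * (((k - 2 : ℕ) : ℝ) + 2)⌋ := by
      have hc : (((k - 2 : ℕ) : ℝ) + 2) = ((k : ℕ) : ℝ) := by
        push_cast [Nat.cast_sub (by omega : 2 ≤ k)]
        ring
      rw [hc]; exact hkspec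
    simp only [charWord]
    omega

theorem stmt5 (α β : ℝ) (hα : Irrational α) (hα0 : 0 < α) (hα1 : α < 1)
    (hβ : Irrational β) (hβ0 : 0 < β) (hβ1 : β < 1) :
    LexLt (charWord α) (charWord β) ↔ α < β := by
  constructor
  · intro hlex
    by_contra hnot
    push_neg at hnot
    rcases hnot.lt_or_eq with hlt | heq
    · exact lexlt_asymm hlex (lex_of_lt β α hβ0 hα1 hlt)
    · subst heq
      obtain ⟨m, _, l⟩ := hlex
      exact lt_irrefl _ l
  · exact lex_of_lt α β hα0 hβ1
end

section
/- Let α ∈ (0,1) be irrational and let β ∈ (1,2) be the real number with d_β(1) = s'_{α,0} (i.e., ⌊β·T_β^n(1)⌋ = ⌈α(n+1)⌉ − ⌈αn⌉ for all n ≥ 0). Then 1 − 1/β ≤ T_β^n(1) ≤ 1 for all n ≥ 0, and moreover both 1 − 1/β and 1 are accumulation points of the sequence (T_β^n(1))_{n≥0}. -/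
/-- The β-transformation `x ↦ βx mod 1`. -/
noncomputable def Tb (β x : ℝ) : ℝ := β * x - ⌊β * x⌋

/-- The β-expansion of 1 : `ε_n = ⌊β ⬝ T_β^n(1)⌋`. -/
noncomputable def dB1 (β : ℝ) (n : ℕ) : ℤ := ⌊β * (Tb β)^[n] 1⌋

open Filter Finset Topology

/-- auxiliary: the ceiling sequence -/
noncomputable def cl (α : ℝ) (m : ℕ) : ℤ := ⌈α * (m : ℝ)⌉

private lemma fract_pos_irr {x : ℝ} (hx : Irrational x) : 0 < Int.fract x := by
  rcases (Int.fract_nonneg x).lt_or_eq with h | h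
  · exact h
  · exfalso
    apply hx.ne_int ⌊x⌋
    have h2 := Int.self_sub_floor x
    rw [← h] at h2
    linarith

private lemma fract_add_cases (x y : ℝ) :
    Int.fract (x + y) = Int.fract x + Int.fract y ∨
    Int.fract (x + y) = Int.fract x + Int.fract y - 1 := by
  set s := Int.fract x + Int.fract y with hs
  have h0 : 0 ≤ s := add_nonneg (Int.fract_nonneg x) (Int.fract_nonneg y)
  have h2 : s < 2 := by
    have := Int.fract_lt_one x
    have := Int.fract_lt_one y
    rw [hs]; linarith
  have key : Int.fract (x + y) = Int.fract s := by
    have hx := Int.self_sub_floor x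
    have hy := Int.self_sub_floor y
    have hxy : x + y = s + ((⌊x⌋ + ⌊y⌋ : ℤ) : ℝ) := by push_cast; rw [hs]; linarith
    rw [hxy, Int.fract_add_intCast]
  rcases lt_or_ge s 1 with h1 | h1
  · left; rw [key, Int.fract_eq_self.2 ⟨h0, h1⟩]
  · right
    have : Int.fract s = Int.fract (s - ((1:ℤ):ℝ)) := (Int.fract_sub_intCast s 1).symm
    rw [key, this]
    push_cast
    rw [Int.fract_eq_self.2 ⟨by linarith, by linarith⟩]

private lemma step_lemma {d A B : ℝ} (hd : 0 < d) (hdBA : d < B - A) (hdA : d ≤ A) (hB : B ≤ 1)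
    (h : ℕ → ℝ) (hh0 : ∀ k, 0 < h k) (hh1 : ∀ k, h k ≤ 1)
    (hstep : ∀ k, h (k + 1) = h k + d ∨ h (k + 1) = h k + d - 1) (K : ℕ) :
    ∃ k, K ≤ k ∧ A < h k ∧ h k < B := by
  by_contra hcon
  push_neg at hcon
  have claim1 : ∀ k, K ≤ k → h k ≤ A → h (k + 1) = h k + d ∧ h (k + 1) ≤ A := by
    intro k hk hkA
    rcases hstep k with h1 | h1
    · refine ⟨h1, ?_⟩
      by_contra hgt
      push_neg at hgt
      have := hcon (k + 1) (by omega) hgt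
      linarith
    · exfalso
      have := hh0 (k + 1)
      linarith
  have claim2 : ∀ k, K ≤ k → h k ≤ A → ∀ m : ℕ, h (k + m) = h k + m * d ∧ h (k + m) ≤ A := by
    intro k hk hkA m
    induction m with
    | zero => simpa using hkA
    | succ m ih =>
      have hx := claim1 (k + m) (by omega) ih.2
      have hee : k + (m + 1) = (k + m) + 1 := rfl
      constructor
      · rw [hee, hx.1, ih.1]; push_cast; ring
      · rw [hee]; exact hx.2
  have noA : ∀ k, K ≤ k → A < h k := by
    intro k hk
    by_contra hle
    push_neg at hle
    obtain ⟨m, hm⟩ := exists_nat_gt (A / d)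
    have h2 := (claim2 k hk hle m).1
    have h3 := (claim2 k hk hle m).2
    rw [div_lt_iff₀ hd] at hm
    have := hh0 k
    linarith
  have hBk : ∀ k, K ≤ k → B ≤ h k := fun k hk => hcon k hk (noA k hk)
  have claim3 : ∀ m : ℕ, h (K + m) = h K + m * d := by
    intro m
    induction m with
    | zero => simp
    | succ m ih =>
      have hee : K + (m + 1) = (K + m) + 1 := rfl
      rcases hstep (K + m) with h1 | h1
      · rw [hee, h1, ih]; push_cast; ring
      · exfalso
        have h2 := hh1 (K + m)
        have h3 := noA ((K + m) + 1) (by omega)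
        have h4 : h ((K + m) + 1) = h (K + m) + d - 1 := h1
        linarith
  obtain ⟨m, hm⟩ := exists_nat_gt (1 / d)
  have h2 := claim3 m
  rw [div_lt_iff₀ hd] at hm
  have h3 := hh1 (K + m)
  have h4 := hBk K le_rfl
  have h5 := hh0 K
  linarith

private lemma exists_small_fract {α : ℝ} (hα : Irrational α) {ε : ℝ} (hε : 0 < ε) :
    ∃ p : ℕ, 0 < p ∧ (Int.fract (α * p) < ε ∨ 1 - ε < Int.fract (α * p)) := by
  obtain ⟨K, hK⟩ := exists_nat_gt (1 / ε)
  have hKpos : (0:ℝ) < K := lt_trans (by positivity) hK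
  have hmap : ∀ i ∈ Finset.range (K + 1),
      (⌊Int.fract (α * (i + 1 : ℕ)) * K⌋₊) ∈ Finset.range K := by
    intro i _
    rw [Finset.mem_range, Nat.floor_lt (mul_nonneg (Int.fract_nonneg _) hKpos.le)]
    calc Int.fract (α * (i + 1 : ℕ)) * K < 1 * K :=
          mul_lt_mul_of_pos_right (Int.fract_lt_one _) hKpos
      _ = (K : ℝ) := one_mul _
  obtain ⟨a, ha, b, hb, hab, hfab⟩ :=
    Finset.exists_ne_map_eq_of_card_lt_of_maps_to
      (by simp : (Finset.range K).card < (Finset.range (K + 1)).card) hmap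
  obtain ⟨i, j, hij, hfij⟩ : ∃ i j : ℕ, i < j ∧
      ⌊Int.fract (α * (i + 1 : ℕ)) * K⌋₊ = ⌊Int.fract (α * (j + 1 : ℕ)) * K⌋₊ := by
    rcases lt_or_gt_of_ne hab with h | h
    · exact ⟨a, b, h, hfab⟩
    · exact ⟨b, a, h, hfab.symm⟩
  set u := Int.fract (α * (i + 1 : ℕ)) with hu
  set v := Int.fract (α * (j + 1 : ℕ)) with hv
  have hclose : |v - u| < 1 / K := by
    have h1 : (⌊u * K⌋₊ : ℝ) ≤ u * K := Nat.floor_le (mul_nonneg (Int.fract_nonneg _) hKpos.le)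
    have h2 : u * K < ⌊u * K⌋₊ + 1 := Nat.lt_floor_add_one _
    have h3 : (⌊v * K⌋₊ : ℝ) ≤ v * K := Nat.floor_le (mul_nonneg (Int.fract_nonneg _) hKpos.le)
    have h4 : v * K < ⌊v * K⌋₊ + 1 := Nat.lt_floor_add_one _
    rw [hfij] at h1 h2
    rw [lt_div_iff₀ hKpos, ← abs_of_pos hKpos, ← abs_mul, abs_lt, sub_mul]
    constructor <;> linarith
  have hKe : 1 / (K : ℝ) < ε := by
    rw [div_lt_iff₀ hKpos]
    rw [div_lt_iff₀ hε] at hK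
    nlinarith
  refine ⟨j - i, by omega, ?_⟩
  have hcast : α * ((j - i : ℕ) : ℝ) = α * (j + 1 : ℕ) - α * (i + 1 : ℕ) := by
    have h5 : ((j - i : ℕ) : ℝ) = (j : ℝ) - i := by
      push_cast [Nat.cast_sub hij.le]
      ring
    rw [h5]
    push_cast
    ring
  have hfr : Int.fract (α * ((j - i : ℕ) : ℝ)) = Int.fract (v - u) := by
    rw [hcast]
    have hju := Int.self_sub_floor (α * ((j + 1 : ℕ) : ℝ))
    have hiu := Int.self_sub_floor (α * ((i + 1 : ℕ) : ℝ))
    have h1 : α * ((j + 1 : ℕ) : ℝ) - α * ((i + 1 : ℕ) : ℝ)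
        = (v - u) + ((⌊α * ((j + 1 : ℕ) : ℝ)⌋ - ⌊α * ((i + 1 : ℕ) : ℝ)⌋ : ℤ) : ℝ) := by
      rw [hv, hu, ← hju, ← hiu]
      push_cast
      ring
    rw [h1, Int.fract_add_intCast]
  have habs := abs_lt.1 hclose
  have hu0 : 0 ≤ u := Int.fract_nonneg _
  have hu1 : u < 1 := Int.fract_lt_one _
  have hv0 : 0 ≤ v := Int.fract_nonneg _
  have hv1 : v < 1 := Int.fract_lt_one _
  rcases le_or_gt 0 (v - u) with hsgn | hsgn
  · left
    rw [hfr, Int.fract_eq_self.2 ⟨hsgn, by linarith⟩]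
    linarith
  · right
    have h6 : Int.fract (v - u) = v - u + 1 := by
      have h1 : Int.fract (v - u) = Int.fract ((v - u + 1) - ((1:ℤ):ℝ)) := by norm_num
      rw [h1, Int.fract_sub_intCast, Int.fract_eq_self.2 ⟨by linarith, by linarith⟩]
    rw [hfr, h6]
    linarith

private lemma dense_fract {α : ℝ} (hα : Irrational α) {A B : ℝ}
    (hA : 0 < A) (hAB : A < B) (hB : B < 1) (M : ℕ) :
    ∃ n : ℕ, M ≤ n ∧ 1 ≤ n ∧ A < Int.fract (α * n) ∧ Int.fract (α * n) < B := by
  have hirr : ∀ m : ℕ, 0 < m → Irrational (α * m) := by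
    intro m hm
    rw [mul_comm]
    exact hα.natCast_mul (by omega)
  set ε := min ((B - A) / 2) (min A (1 - B)) with hε
  have hε0 : 0 < ε := lt_min (by linarith) (lt_min hA (by linarith))
  have hεBA : ε ≤ (B - A) / 2 := min_le_left _ _
  have hεA : ε ≤ A := le_trans (min_le_right _ _) (min_le_left _ _)
  have hεB : ε ≤ 1 - B := le_trans (min_le_right _ _) (min_le_right _ _)
  obtain ⟨p, hp0, hcase⟩ := exists_small_fract hα hε0
  have hppos : ∀ k : ℕ, 0 < (k + 1) * p := fun k => by positivity
  have hstep_eq : ∀ k : ℕ, α * (((k + 1 + 1) * p : ℕ) : ℝ)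
      = α * (((k + 1) * p : ℕ) : ℝ) + α * (p : ℝ) := by
    intro k; push_cast; ring
  rcases hcase with hsmall | hbig
  · -- increasing case
    set d := Int.fract (α * p) with hdd
    have hd0 : 0 < d := fract_pos_irr (hirr p hp0)
    set h : ℕ → ℝ := fun k => Int.fract (α * (((k + 1) * p : ℕ) : ℝ)) with hh
    have hh0 : ∀ k, 0 < h k := fun k => fract_pos_irr (hirr _ (hppos k))
    have hh1 : ∀ k, h k ≤ 1 := fun k => (Int.fract_lt_one _).le
    have hstep : ∀ k, h (k + 1) = h k + d ∨ h (k + 1) = h k + d - 1 := by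
      intro k
      have hfc := fract_add_cases (α * (((k + 1) * p : ℕ) : ℝ)) (α * (p : ℝ))
      rw [← hstep_eq k] at hfc
      exact hfc
    obtain ⟨k, hk, hk1, hk2⟩ := step_lemma hd0 (by linarith : d < B - A)
      (by linarith : d ≤ A) hB.le h hh0 hh1 hstep M
    simp only [hh] at hk1 hk2
    refine ⟨(k + 1) * p, ?_, ?_, hk1, hk2⟩
    · calc M ≤ k := hk
        _ ≤ (k + 1) * 1 := by omega
        _ ≤ (k + 1) * p := Nat.mul_le_mul_left _ hp0
    · have := hppos k; omega
  · -- decreasing case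
    set d := 1 - Int.fract (α * p) with hdd
    have hfl1 := Int.fract_lt_one (α * (p:ℝ))
    have hd0 : 0 < d := by rw [hdd]; linarith
    have hdε : d < ε := by rw [hdd]; linarith
    set h : ℕ → ℝ := fun k => 1 - Int.fract (α * (((k + 1) * p : ℕ) : ℝ)) with hh
    have hh0 : ∀ k, 0 < h k := fun k => by
      have := Int.fract_lt_one (α * (((k + 1) * p : ℕ) : ℝ))
      simp only [hh]; linarith
    have hh1 : ∀ k, h k ≤ 1 := fun k => by
      have := Int.fract_nonneg (α * (((k + 1) * p : ℕ) : ℝ))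
      simp only [hh]; linarith
    have hstep : ∀ k, h (k + 1) = h k + d ∨ h (k + 1) = h k + d - 1 := by
      intro k
      have hfc := fract_add_cases (α * (((k + 1) * p : ℕ) : ℝ)) (α * (p : ℝ))
      rw [← hstep_eq k] at hfc
      rcases hfc with h1 | h1
      · right; simp only [hh]; rw [h1, hdd]; ring
      · left; simp only [hh]; rw [h1, hdd]; ring
    obtain ⟨k, hk, hk1, hk2⟩ := step_lemma hd0 (by linarith : d < (1 - A) - (1 - B))
      (by linarith : d ≤ 1 - B) (by linarith : 1 - A ≤ 1) h hh0 hh1 hstep M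
    simp only [hh] at hk1 hk2
    refine ⟨(k + 1) * p, ?_, ?_, by linarith, by linarith⟩
    · calc M ≤ k := hk
        _ ≤ (k + 1) * 1 := by omega
        _ ≤ (k + 1) * p := Nat.mul_le_mul_left _ hp0
    · have := hppos k; omega

private lemma abel_bound {β : ℝ} (hβ : 1 < β) (d : ℕ → ℝ) (C : ℝ) :
    ∀ N : ℕ, (∀ k : ℕ, 1 ≤ k → k ≤ N → (∑ j ∈ Finset.range k, d j) ≤ C) →
      (∑ j ∈ Finset.range N, d j / β ^ (j + 1))
        + (C - ∑ j ∈ Finset.range N, d j) / β ^ (N + 1) ≤ C / β := by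
  have hβ0 : 0 < β := lt_trans one_pos hβ
  intro N
  induction N with
  | zero => intro _; simp [pow_one]
  | succ N ih =>
    intro hyp
    have ihh := ih (fun k h1 h2 => hyp k h1 (le_trans h2 (Nat.le_succ N)))
    rw [Finset.sum_range_succ, Finset.sum_range_succ]
    have hCD : 0 ≤ C - ((∑ j ∈ Finset.range N, d j) + d N) := by
      have := hyp (N + 1) (by omega) le_rfl
      rw [Finset.sum_range_succ] at this
      linarith
    have hpow : β ^ (N + 1) ≤ β ^ (N + 1 + 1) := by
      apply pow_le_pow_right₀ hβ.le
      omega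
    have hpp : (0:ℝ) < β ^ (N + 1) := pow_pos hβ0 _
    have key : (C - ((∑ j ∈ Finset.range N, d j) + d N)) / β ^ (N + 1 + 1)
        ≤ (C - ((∑ j ∈ Finset.range N, d j) + d N)) / β ^ (N + 1) :=
      div_le_div_of_nonneg_left hCD hpp hpow
    have heq : (∑ j ∈ Finset.range N, d j / β ^ (j + 1)) + d N / β ^ (N + 1)
        + (C - ((∑ j ∈ Finset.range N, d j) + d N)) / β ^ (N + 1)
        = (∑ j ∈ Finset.range N, d j / β ^ (j + 1))
          + (C - ∑ j ∈ Finset.range N, d j) / β ^ (N + 1) := by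
      field_simp
      ring
    linarith

private lemma ceil_irr {α : ℝ} (hα : Irrational α) {m : ℕ} (hm : 1 ≤ m) :
    ((cl α m : ℤ) : ℝ) = α * m + 1 - Int.fract (α * m) := by
  have hirr : Irrational (α * m) := by rw [mul_comm]; exact hα.natCast_mul (by omega)
  have hfl : (⌊α * (m:ℝ)⌋ : ℝ) < α * m :=
    lt_of_le_of_ne (Int.floor_le _) (fun h => hirr.ne_int ⌊α * (m:ℝ)⌋ h.symm)
  have hceil : cl α m = ⌊α * (m:ℝ)⌋ + 1 := by
    rw [cl]
    apply le_antisymm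
    · apply Int.ceil_le.2
      push_cast
      exact (Int.lt_floor_add_one _).le
    · apply Int.add_one_le_iff.2
      exact_mod_cast lt_of_lt_of_le hfl (Int.le_ceil _)
  rw [hceil]
  push_cast
  have := Int.self_sub_floor (α * (m:ℝ))
  linarith

private lemma ceil_split {α : ℝ} (hα : Irrational α) {n k : ℕ} (hn : 1 ≤ n) (hk : 1 ≤ k) :
    (1 < Int.fract (α * n) + Int.fract (α * k) → cl α (n + k) = cl α n + cl α k) ∧
    (Int.fract (α * n) + Int.fract (α * k) < 1 → cl α (n + k) = cl α n + cl α k - 1) := by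
  have hn' := ceil_irr hα hn
  have hk' := ceil_irr hα hk
  have hnk' := ceil_irr hα (m := n + k) (by omega)
  set Fn := Int.fract (α * (n : ℝ))
  set Fk := Int.fract (α * (k : ℝ))
  set Fnk := Int.fract (α * ((n + k : ℕ) : ℝ))
  have hFn0 : 0 ≤ Fn := Int.fract_nonneg _
  have hFn1 : Fn < 1 := Int.fract_lt_one _
  have hFk0 : 0 ≤ Fk := Int.fract_nonneg _
  have hFk1 : Fk < 1 := Int.fract_lt_one _
  have hFnk0 : 0 ≤ Fnk := Int.fract_nonneg _
  have hFnk1 : Fnk < 1 := Int.fract_lt_one _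
  have hz : ((cl α (n + k) - cl α n - cl α k : ℤ) : ℝ) = Fn + Fk - Fnk - 1 := by
    push_cast
    rw [hnk', hn', hk']
    push_cast
    ring
  constructor
  · intro h
    have h1 : (-1 : ℝ) < ((cl α (n + k) - cl α n - cl α k : ℤ) : ℝ) := by rw [hz]; linarith
    have h2 : ((cl α (n + k) - cl α n - cl α k : ℤ) : ℝ) < 1 := by rw [hz]; linarith
    have h1' : (-1 : ℤ) < cl α (n + k) - cl α n - cl α k := by exact_mod_cast h1
    have h2' : cl α (n + k) - cl α n - cl α k < 1 := by exact_mod_cast h2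
    omega
  · intro h
    have h1 : (-2 : ℝ) < ((cl α (n + k) - cl α n - cl α k : ℤ) : ℝ) := by rw [hz]; linarith
    have h2 : ((cl α (n + k) - cl α n - cl α k : ℤ) : ℝ) < 0 := by rw [hz]; linarith
    have h1' : (-2 : ℤ) < cl α (n + k) - cl α n - cl α k := by exact_mod_cast h1
    have h2' : cl α (n + k) - cl α n - cl α k < 0 := by exact_mod_cast h2
    omega

private lemma sUp_eq_cl (α : ℝ) (m : ℕ) : sUp α 0 m = cl α (m + 1) - cl α m := by
  have h1 : α * ((m : ℝ) + 1) + 0 = α * ((m + 1 : ℕ) : ℝ) := by push_cast; ring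
  have h2 : α * (m : ℝ) + 0 = α * (m : ℝ) := add_zero _
  rw [sUp, h1, h2, cl, cl]

private lemma cl_zero (α : ℝ) : cl α 0 = 0 := by
  rw [cl]
  norm_num

theorem stmt7 (α : ℝ) (hα : Irrational α) (hα0 : 0 < α) (hα1 : α < 1)
    (β : ℝ) (hβ1 : 1 < β) (hβ2 : β < 2)
    (hd : ∀ n : ℕ, dB1 β n = sUp α 0 n) :
    (∀ n : ℕ, 1 - 1 / β ≤ (Tb β)^[n] 1 ∧ (Tb β)^[n] 1 ≤ 1) ∧
    MapClusterPt (1 - 1 / β) Filter.atTop (fun n : ℕ => (Tb β)^[n] 1) ∧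
    MapClusterPt 1 Filter.atTop (fun n : ℕ => (Tb β)^[n] 1) := by
  have hβ0 : (0:ℝ) < β := lt_trans one_pos hβ1
  -- basic range fact
  have hrange : ∀ n : ℕ, 0 ≤ (Tb β)^[n] 1 ∧ (Tb β)^[n] 1 ≤ 1 := by
    intro n
    cases n with
    | zero => norm_num
    | succ n =>
      rw [Function.iterate_succ_apply']
      have : Tb β ((Tb β)^[n] 1) = Int.fract (β * (Tb β)^[n] 1) := by
        rw [Tb]; exact Int.self_sub_floor _
      rw [this]
      exact ⟨Int.fract_nonneg _, (Int.fract_lt_one _).le⟩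
  -- recurrence
  have hrec : ∀ n : ℕ, (Tb β)^[n + 1] 1 = β * (Tb β)^[n] 1 - (sUp α 0 n : ℝ) := by
    intro n
    rw [Function.iterate_succ_apply', Tb]
    have h2 : ⌊β * (Tb β)^[n] 1⌋ = sUp α 0 n := hd n
    rw [h2]
  -- closed form
  have hclosed : ∀ n N : ℕ, (Tb β)^[n] 1 =
      (∑ j ∈ Finset.range N, (sUp α 0 (n + j) : ℝ) / β ^ (j + 1))
        + (Tb β)^[n + N] 1 / β ^ N := by
    intro n N
    induction N with
    | zero => simp
    | succ N ih =>
      have hr := hrec (n + N)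
      rw [Finset.sum_range_succ]
      have hne : (β:ℝ) ^ N ≠ 0 := pow_ne_zero _ (ne_of_gt hβ0)
      have hee : n + (N + 1) = (n + N) + 1 := rfl
      rw [hee, hr, ih]
      field_simp
      ring
  -- difference formula
  have hdiff : ∀ n N : ℕ, (Tb β)^[n] 1 - 1 =
      (∑ j ∈ Finset.range N, ((sUp α 0 (n + j) : ℝ) - (sUp α 0 j : ℝ)) / β ^ (j + 1))
        + ((Tb β)^[n + N] 1 - (Tb β)^[N] 1) / β ^ N := by
    intro n N
    have h1 := hclosed n N
    have h2 := hclosed 0 N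
    simp only [Nat.zero_add, Function.iterate_zero_apply] at h2
    have hsplit : ∑ j ∈ Finset.range N, ((sUp α 0 (n + j) : ℝ) - (sUp α 0 j : ℝ)) / β ^ (j + 1)
        = (∑ j ∈ Finset.range N, (sUp α 0 (n + j) : ℝ) / β ^ (j + 1))
          - ∑ j ∈ Finset.range N, (sUp α 0 j : ℝ) / β ^ (j + 1) := by
      rw [← Finset.sum_sub_distrib]
      exact Finset.sum_congr rfl fun j _ => by ring
    have hsub : ((Tb β)^[n + N] 1 - (Tb β)^[N] 1) / β ^ N
        = (Tb β)^[n + N] 1 / β ^ N - (Tb β)^[N] 1 / β ^ N := sub_div _ _ _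
    rw [hsplit, hsub]
    linarith
  -- partial sums of digits telescope
  have hsum_eps : ∀ n k : ℕ, ∑ j ∈ Finset.range k, sUp α 0 (n + j) = cl α (n + k) - cl α n := by
    intro n k
    have h1 : ∑ j ∈ Finset.range k, sUp α 0 (n + j)
        = ∑ j ∈ Finset.range k, ((fun j => cl α (n + j)) (j + 1) - (fun j => cl α (n + j)) j) := by
      apply Finset.sum_congr rfl
      intro j _
      simp only []
      rw [sUp_eq_cl, Nat.add_assoc]
    rw [h1, Finset.sum_range_sub (fun j => cl α (n + j)) k]
    simp
  -- cast of partial sums of differences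
  have hDcast : ∀ n k : ℕ, ∑ j ∈ Finset.range k, ((sUp α 0 (n + j) : ℝ) - (sUp α 0 j : ℝ))
      = ((cl α (n + k) - cl α n - cl α k : ℤ) : ℝ) := by
    intro n k
    have h1 : ∑ j ∈ Finset.range k, ((sUp α 0 (n + j) : ℝ) - (sUp α 0 j : ℝ))
        = ((∑ j ∈ Finset.range k, (sUp α 0 (n + j) - sUp α 0 j) : ℤ) : ℝ) := by
      push_cast
      rfl
    rw [h1]
    congr 1
    rw [Finset.sum_sub_distrib, hsum_eps n k]
    have h2 := hsum_eps 0 k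
    simp only [Nat.zero_add] at h2
    rw [h2, cl_zero α]
    ring
  -- ceiling subadditivity bounds
  have hceil_ub : ∀ n k : ℕ, cl α (n + k) - cl α n - cl α k ≤ 0 := by
    intro n k
    have hc : α * ((n + k : ℕ) : ℝ) = α * ((n:ℕ) : ℝ) + α * ((k:ℕ) : ℝ) := by push_cast; ring
    have := Int.ceil_add_le (α * ((n:ℕ) : ℝ)) (α * ((k:ℕ) : ℝ))
    simp only [cl]
    rw [hc]
    omega
  have hceil_lb : ∀ n k : ℕ, -1 ≤ cl α (n + k) - cl α n - cl α k := by
    intro n k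
    have h1 : ((cl α n : ℤ) : ℝ) < α * (n:ℕ) + 1 := Int.ceil_lt_add_one _
    have h2 : ((cl α k : ℤ) : ℝ) < α * (k:ℕ) + 1 := Int.ceil_lt_add_one _
    have h3 : α * ((n:ℕ):ℝ) + α * ((k:ℕ):ℝ) ≤ ((cl α (n + k) : ℤ) : ℝ) := by
      have hc : α * ((n + k : ℕ) : ℝ) = α * ((n:ℕ) : ℝ) + α * ((k:ℕ) : ℝ) := by push_cast; ring
      rw [cl, ← hc]
      exact Int.le_ceil _
    have h4 : ((cl α n + cl α k : ℤ) : ℝ) < ((cl α (n + k) : ℤ) : ℝ) + 2 := by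
      push_cast
      push_cast at h1 h2 h3
      linarith
    have h5 : (cl α n + cl α k : ℤ) < cl α (n + k) + 2 := by exact_mod_cast h4
    omega
  -- sum bounds via Abel summation
  have hS_ub : ∀ n N : ℕ,
      ∑ j ∈ Finset.range N, ((sUp α 0 (n + j) : ℝ) - (sUp α 0 j : ℝ)) / β ^ (j + 1) ≤ 0 := by
    intro n N
    have hhyp : ∀ k : ℕ, 1 ≤ k → k ≤ N →
        (∑ j ∈ Finset.range k, ((sUp α 0 (n + j) : ℝ) - (sUp α 0 j : ℝ))) ≤ 0 := by
      intro k _ _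
      rw [hDcast n k]
      exact_mod_cast hceil_ub n k
    have habel := abel_bound hβ1 (fun j => (sUp α 0 (n + j) : ℝ) - (sUp α 0 j : ℝ)) 0 N hhyp
    have hnn : 0 ≤ (0 - ∑ j ∈ Finset.range N, ((sUp α 0 (n + j) : ℝ) - (sUp α 0 j : ℝ))) := by
      have := hDcast n N
      rw [this]
      have := hceil_ub n N
      simp only [zero_sub, neg_nonneg]
      exact_mod_cast this
    have hpp : (0:ℝ) < β ^ (N + 1) := pow_pos hβ0 _
    have h7 := div_nonneg hnn hpp.le
    have hzd : (0:ℝ) / β = 0 := zero_div β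
    linarith
  have hS_lb : ∀ n N : ℕ,
      -(1/β) ≤ ∑ j ∈ Finset.range N, ((sUp α 0 (n + j) : ℝ) - (sUp α 0 j : ℝ)) / β ^ (j + 1) := by
    intro n N
    have hhyp : ∀ k : ℕ, 1 ≤ k → k ≤ N →
        (∑ j ∈ Finset.range k, ((sUp α 0 j : ℝ) - (sUp α 0 (n + j) : ℝ))) ≤ 1 := by
      intro k _ _
      have h1 : ∑ j ∈ Finset.range k, ((sUp α 0 j : ℝ) - (sUp α 0 (n + j) : ℝ))
          = -∑ j ∈ Finset.range k, ((sUp α 0 (n + j) : ℝ) - (sUp α 0 j : ℝ)) := by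
        rw [← Finset.sum_neg_distrib]
        exact Finset.sum_congr rfl fun j _ => by ring
      rw [h1, hDcast n k]
      have := hceil_lb n k
      have h2 : (-1 : ℝ) ≤ ((cl α (n + k) - cl α n - cl α k : ℤ) : ℝ) := by exact_mod_cast this
      linarith
    have habel := abel_bound hβ1 (fun j => (sUp α 0 j : ℝ) - (sUp α 0 (n + j) : ℝ)) 1 N hhyp
    have hflip : ∑ j ∈ Finset.range N, ((sUp α 0 j : ℝ) - (sUp α 0 (n + j) : ℝ)) / β ^ (j + 1)
        = -∑ j ∈ Finset.range N, ((sUp α 0 (n + j) : ℝ) - (sUp α 0 j : ℝ)) / β ^ (j + 1) := by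
      rw [← Finset.sum_neg_distrib]
      exact Finset.sum_congr rfl fun j _ => by ring
    have hflip2 : ∑ j ∈ Finset.range N, ((sUp α 0 j : ℝ) - (sUp α 0 (n + j) : ℝ))
        = -∑ j ∈ Finset.range N, ((sUp α 0 (n + j) : ℝ) - (sUp α 0 j : ℝ)) := by
      rw [← Finset.sum_neg_distrib]
      exact Finset.sum_congr rfl fun j _ => by ring
    have hnn : 0 ≤ (1 - ∑ j ∈ Finset.range N, ((sUp α 0 j : ℝ) - (sUp α 0 (n + j) : ℝ))) := by
      rw [hflip2, hDcast n N]
      have := hceil_lb n N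
      have h2 : (-1 : ℝ) ≤ ((cl α (n + N) - cl α n - cl α N : ℤ) : ℝ) := by exact_mod_cast this
      linarith
    have hpp : (0:ℝ) < β ^ (N + 1) := pow_pos hβ0 _
    have h3 := div_nonneg hnn hpp.le
    rw [hflip] at habel
    linarith
  -- part 1 : the bounds, via limits
  have htend : Tendsto (fun N : ℕ => (1/β) ^ N) atTop (𝓝 0) := by
    apply tendsto_pow_atTop_nhds_zero_of_lt_one (by positivity)
    rw [div_lt_one hβ0]
    exact hβ1
  have hpowd : ∀ N : ℕ, (1:ℝ) / β ^ N = (1/β) ^ N := fun N => by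
    rw [one_div_pow]
  have hub : ∀ n : ℕ, (Tb β)^[n] 1 ≤ 1 := by
    intro n
    have hkey : ∀ N : ℕ, (Tb β)^[n] 1 - 1 ≤ (1/β) ^ N := by
      intro N
      have h1 := hdiff n N
      have h2 := hS_ub n N
      have h3 : ((Tb β)^[n + N] 1 - (Tb β)^[N] 1) / β ^ N ≤ 1 / β ^ N := by
        apply div_le_div_of_nonneg_right ?_ (pow_pos hβ0 N).le |>.trans_eq rfl
        · have := (hrange (n + N)).2
          have := (hrange N).1
          linarith
      rw [hpowd N] at h3
      linarith
    have := ge_of_tendsto' htend (fun N => hkey N)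
    linarith
  have hlb : ∀ n : ℕ, 1 - 1/β ≤ (Tb β)^[n] 1 := by
    intro n
    have hkey : ∀ N : ℕ, -(1/β) - (1/β) ^ N ≤ (Tb β)^[n] 1 - 1 := by
      intro N
      have h1 := hdiff n N
      have h2 := hS_lb n N
      have h3 : -(1 / β ^ N) ≤ ((Tb β)^[n + N] 1 - (Tb β)^[N] 1) / β ^ N := by
        rw [neg_div' ]
        apply div_le_div_of_nonneg_right ?_ (pow_pos hβ0 N).le |>.trans_eq rfl
        · have := (hrange (n + N)).1
          have := (hrange N).2
          linarith
      rw [hpowd N] at h3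
      linarith
    have htend2 : Tendsto (fun N : ℕ => -(1/β) - (1/β) ^ N) atTop (𝓝 (-(1/β) - 0)) :=
      tendsto_const_nhds.sub htend
    have := le_of_tendsto' htend2 (fun N => hkey N)
    linarith
  refine ⟨fun n => ⟨hlb n, hub n⟩, ?_, ?_⟩
  -- pattern lemma : if digits agree up to N then close
  · -- cluster point at 1 - 1/β
    rw [mapClusterPt_iff_frequently]
    intro s hs
    rw [Metric.mem_nhds_iff] at hs
    obtain ⟨δ, hδ, hball⟩ := hs
    rw [Filter.frequently_atTop]
    intro M
    obtain ⟨N0, hN0⟩ := (htend.eventually (gt_mem_nhds hδ)).exists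
    obtain ⟨N, hN⟩ : ∃ N : ℕ, N = N0 + 1 := ⟨N0 + 1, rfl⟩
    have hNδ : (1/β) ^ N < δ := by
      have : (1/β) ^ N ≤ (1/β) ^ N0 := by
        apply pow_le_pow_of_le_one (by positivity) (by rw [div_le_one hβ0]; exact hβ1.le)
        omega
      linarith
    have hNne : (Finset.Icc 1 N).Nonempty := ⟨1, by simp [hN]⟩
    set ν := (Finset.Icc 1 N).sup' hNne (fun k => Int.fract (α * k)) with hν
    have hν1 : ν < 1 := by
      rw [hν, Finset.sup'_lt_iff]
      exact fun k _ => Int.fract_lt_one _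
    have hν0 : 0 ≤ ν := by
      have hmem : (1:ℕ) ∈ Finset.Icc 1 N := Finset.mem_Icc.2 ⟨le_refl 1, by omega⟩
      have := Finset.le_sup' (fun k => Int.fract (α * (k:ℕ))) hmem
      exact le_trans (Int.fract_nonneg (α * (1:ℕ))) this
    obtain ⟨n, hnM, hn1, hfr1, hfr2⟩ := dense_fract hα
      (by linarith : (0:ℝ) < (1 - ν)/4) (by linarith : (1 - ν)/4 < (1 - ν)/2)
      (by linarith : (1 - ν)/2 < 1) M
    -- digit pattern : v k = -1 for 1 ≤ k ≤ N
    have hvk : ∀ k : ℕ, 1 ≤ k → k ≤ N → cl α (n + k) = cl α n + cl α k - 1 := by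
      intro k hk1 hk2
      have hsum : Int.fract (α * n) + Int.fract (α * k) < 1 := by
        have hle : Int.fract (α * k) ≤ ν :=
          Finset.le_sup' (fun k => Int.fract (α * (k:ℕ))) (Finset.mem_Icc.2 ⟨hk1, hk2⟩)
        linarith
      exact (ceil_split hα hn1 hk1).2 hsum
    -- the sum collapses to -1/β
    have hsumval : ∑ j ∈ Finset.range N, ((sUp α 0 (n + j) : ℝ) - (sUp α 0 j : ℝ)) / β ^ (j + 1)
        = -(1/β) := by
      have hterm : ∀ j ∈ Finset.range N, ((sUp α 0 (n + j) : ℝ) - (sUp α 0 j : ℝ)) / β ^ (j + 1)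
          = if j = 0 then -(1/β) else 0 := by
        intro j hj
        rw [Finset.mem_range] at hj
        rcases Nat.eq_zero_or_pos j with rfl | hjpos
        · simp only [if_pos rfl]
          have h1 : sUp α 0 (n + 0) = cl α (n + 1) - cl α n := by
            rw [Nat.add_zero, sUp_eq_cl]
          have h2 : sUp α 0 0 = cl α 1 - cl α 0 := sUp_eq_cl α 0
          have h3 := hvk 1 le_rfl (by omega)
          rw [h1, h2, h3, cl_zero]
          push_cast
          ring
        · rw [if_neg (by omega)]
          have h1 : sUp α 0 (n + j) = cl α (n + (j+1)) - cl α (n + j) := by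
            rw [sUp_eq_cl, Nat.add_assoc]
          have h2 : sUp α 0 j = cl α (j + 1) - cl α j := sUp_eq_cl α j
          have h3 := hvk (j + 1) (by omega) (by omega)
          have h4 := hvk j (by omega) (by omega)
          rw [h1, h2, h3, h4]
          push_cast
          ring
      rw [Finset.sum_congr rfl hterm]
      rw [Finset.sum_ite_eq' (Finset.range N) 0 (fun _ => -(1/β))]
      simp [hN]
  -- conclude
    have hclose : |(Tb β)^[n] 1 - (1 - 1/β)| < δ := by
      have h1 := hdiff n N
      rw [hsumval] at h1
      have h2 : (Tb β)^[n] 1 - (1 - 1/β) = ((Tb β)^[n + N] 1 - (Tb β)^[N] 1) / β ^ N := by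
        linarith
      rw [h2, abs_div, abs_of_pos (pow_pos hβ0 N)]
      have h3 : |(Tb β)^[n + N] 1 - (Tb β)^[N] 1| ≤ 1 := by
        rw [abs_le]
        have ha := hrange (n + N)
        have hb := hrange N
        constructor <;> linarith [ha.1, ha.2, hb.1, hb.2]
      calc |(Tb β)^[n + N] 1 - (Tb β)^[N] 1| / β ^ N ≤ 1 / β ^ N := by
            apply div_le_div_of_nonneg_right h3 (pow_pos hβ0 N).le |>.trans_eq rfl
        _ = (1/β) ^ N := hpowd N
        _ < δ := hNδ
    exact ⟨n, hnM, hball (by rw [Metric.mem_ball, Real.dist_eq]; exact hclose)⟩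
  · -- cluster point at 1
    rw [mapClusterPt_iff_frequently]
    intro s hs
    rw [Metric.mem_nhds_iff] at hs
    obtain ⟨δ, hδ, hball⟩ := hs
    rw [Filter.frequently_atTop]
    intro M
    obtain ⟨N0, hN0⟩ := (htend.eventually (gt_mem_nhds hδ)).exists
    obtain ⟨N, hN⟩ : ∃ N : ℕ, N = N0 + 1 := ⟨N0 + 1, rfl⟩
    have hNδ : (1/β) ^ N < δ := by
      have : (1/β) ^ N ≤ (1/β) ^ N0 := by
        apply pow_le_pow_of_le_one (by positivity) (by rw [div_le_one hβ0]; exact hβ1.le)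
        omega
      linarith
    have hNne : (Finset.Icc 1 N).Nonempty := ⟨1, by simp [hN]⟩
    set μ := (Finset.Icc 1 N).inf' hNne (fun k => Int.fract (α * k)) with hμ
    have hμ0 : 0 < μ := by
      rw [hμ, Finset.lt_inf'_iff]
      intro k hk
      rw [Finset.mem_Icc] at hk
      apply fract_pos_irr
      rw [mul_comm]
      exact hα.natCast_mul (by omega)
    have hμ1 : μ < 1 := by
      have hmem : (1:ℕ) ∈ Finset.Icc 1 N := Finset.mem_Icc.2 ⟨le_refl 1, by omega⟩
      have := Finset.inf'_le (fun k => Int.fract (α * (k:ℕ))) hmem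
      exact lt_of_le_of_lt this (Int.fract_lt_one _)
    obtain ⟨n, hnM, hn1, hfr1, hfr2⟩ := dense_fract hα
      (by linarith : (0:ℝ) < 1 - μ/2) (by linarith : 1 - μ/2 < 1 - μ/4)
      (by linarith : 1 - μ/4 < 1) M
    have hvk : ∀ k : ℕ, 1 ≤ k → k ≤ N → cl α (n + k) = cl α n + cl α k := by
      intro k hk1 hk2
      have hge : μ ≤ Int.fract (α * k) :=
        Finset.inf'_le (fun k => Int.fract (α * (k:ℕ))) (Finset.mem_Icc.2 ⟨hk1, hk2⟩)
      have hsum : 1 < Int.fract (α * n) + Int.fract (α * k) := by linarith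
      exact (ceil_split hα hn1 hk1).1 hsum
    have hsumval : ∑ j ∈ Finset.range N, ((sUp α 0 (n + j) : ℝ) - (sUp α 0 j : ℝ)) / β ^ (j + 1)
        = 0 := by
      apply Finset.sum_eq_zero
      intro j hj
      rw [Finset.mem_range] at hj
      have h1 : sUp α 0 (n + j) = cl α (n + (j+1)) - cl α (n + j) := by
        rw [sUp_eq_cl, Nat.add_assoc]
      have h2 : sUp α 0 j = cl α (j + 1) - cl α j := sUp_eq_cl α j
      have h3 := hvk (j + 1) (by omega) (by omega)
      rcases Nat.eq_zero_or_pos j with rfl | hjpos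
      · rw [h1, h2, h3]
        simp only [Nat.add_zero, cl_zero]
        push_cast
        ring
      · have h4 := hvk j (by omega) (by omega)
        rw [h1, h2, h3, h4]
        push_cast
        ring
    have hclose : |(Tb β)^[n] 1 - 1| < δ := by
      have h1 := hdiff n N
      rw [hsumval] at h1
      have h2 : (Tb β)^[n] 1 - 1 = ((Tb β)^[n + N] 1 - (Tb β)^[N] 1) / β ^ N := by
        linarith
      rw [h2, abs_div, abs_of_pos (pow_pos hβ0 N)]
      have h3 : |(Tb β)^[n + N] 1 - (Tb β)^[N] 1| ≤ 1 := by
        rw [abs_le]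
        have ha := hrange (n + N)
        have hb := hrange N
        constructor <;> linarith [ha.1, ha.2, hb.1, hb.2]
      calc |(Tb β)^[n + N] 1 - (Tb β)^[N] 1| / β ^ N ≤ 1 / β ^ N := by
            apply div_le_div_of_nonneg_right h3 (pow_pos hβ0 N).le |>.trans_eq rfl
        _ = (1/β) ^ N := hpowd N
        _ < δ := hNδ
    exact ⟨n, hnM, hball (by rw [Metric.mem_ball, Real.dist_eq]; exact hclose)⟩
end

section
/- Let β ∈ (1,2) be such that the sequence d_β(1) is not eventually periodic (equivalently, the set {T_β^n(1) : n ≥ 0} is infinite) and 1 − 1/β ≤ T_β^n(1) ≤ 1 for all n ≥ 0. Then d_β(1) is a Sturmian word; more precisely, there is an irrational α ∈ (0,1) such that d_β(1) = s'_{α,0}, i.e., ε_n = ⌈α(n+1)⌉ − ⌈αn⌉ for all n ≥ 0. -/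
/-- A sequence is eventually periodic. -/
def EventuallyPeriodic {A : Type*} (x : ℕ → A) : Prop :=
  ∃ m p : ℕ, 0 < p ∧ ∀ n, m ≤ n → x (n + p) = x n

namespace S8
noncomputable def W (β : ℝ) (a n : ℕ) : ℤ := ∑ k ∈ Finset.range n, dB1 β (a + k)

variable {β : ℝ}

lemma x_succ (n : ℕ) : (Tb β)^[n + 1] 1 = β * (Tb β)^[n] 1 - dB1 β n := by
  rw [Function.iterate_succ_apply', Tb, dB1]

lemma e01 (hβ1 : 1 < β) (hβ2 : β < 2)
    (hbd : ∀ n : ℕ, 1 - 1 / β ≤ (Tb β)^[n] 1 ∧ (Tb β)^[n] 1 ≤ 1) (n : ℕ) :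
    dB1 β n = 0 ∨ dB1 β n = 1 := by
  have hx := hbd n
  have hβ0 : (0:ℝ) < β := by linarith
  have h1 : (0:ℝ) < 1 - 1/β := by
    have : 1/β < 1 := by rw [div_lt_one hβ0]; linarith
    linarith
  have hge : (0:ℝ) ≤ β * (Tb β)^[n] 1 := by nlinarith [hx.1]
  have hlt : β * (Tb β)^[n] 1 < 2 := by nlinarith [hx.2, hx.1]
  have g1 : 0 ≤ dB1 β n := Int.floor_nonneg.mpr hge
  have g2 : dB1 β n < 2 := by
    have := Int.floor_le (β * (Tb β)^[n] 1)
    have : ((dB1 β n : ℝ)) < 2 := lt_of_le_of_lt (by exact_mod_cast Int.floor_le _) hlt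
    exact_mod_cast this
  omega

lemma key (hβ1 : 1 < β) (a : ℕ) : ∀ n : ℕ,
    ∑ k ∈ Finset.range n, (dB1 β (a + k) : ℝ) * β⁻¹ ^ (k + 1)
      = (Tb β)^[a] 1 - (Tb β)^[a + n] 1 * β⁻¹ ^ n := by
  have hβ0 : β ≠ 0 := by intro h; rw [h] at hβ1; linarith
  intro n
  induction n with
  | zero => simp
  | succ n ih =>
      rw [Finset.sum_range_succ, ih]
      have hx : (Tb β)^[a + (n+1)] 1 = β * (Tb β)^[a + n] 1 - dB1 β (a + n) := by
        rw [← x_succ (a + n)]; ring_nf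
      rw [hx]
      have hpow : β * β⁻¹ ^ (n + 1) = β⁻¹ ^ n := by
        rw [pow_succ]; field_simp
      linear_combination ((Tb β)^[a + n] 1) * hpow

section
variable {β : ℝ}
variable (hβ1 : 1 < β) (hβ2 : β < 2)
variable (hbd : ∀ n : ℕ, 1 - 1 / β ≤ (Tb β)^[n] 1 ∧ (Tb β)^[n] 1 ≤ 1)

include hβ1 hβ2 hbd

/-- lex-maximality core: the expansion of 1 dominates all its shifts. -/
lemma lexmax (a j : ℕ) (hk : ∀ k, k < j → dB1 β (a + k) = dB1 β k)
    (ha : dB1 β (a + j) = 1) (h0 : dB1 β j = 0) : False := by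
  have hβ0 : (0:ℝ) < β := by linarith
  have h1β : 1/β < 1 := by rw [div_lt_one hβ0]; linarith
  have K1 := key hβ1 a (j + 1)
  have K2 := key hβ1 0 (j + 1)
  simp only [Nat.zero_add, Function.iterate_zero_apply] at K2
  -- difference of sums equals β⁻¹ ^ (j+1)
  have hdiff : ∑ k ∈ Finset.range (j + 1), ((dB1 β (a + k) : ℝ) * β⁻¹ ^ (k + 1)
        - (dB1 β k : ℝ) * β⁻¹ ^ (k + 1)) = β⁻¹ ^ (j + 1) := by
    rw [Finset.sum_range_succ]
    have hz : ∑ k ∈ Finset.range j, ((dB1 β (a + k) : ℝ) * β⁻¹ ^ (k + 1)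
        - (dB1 β k : ℝ) * β⁻¹ ^ (k + 1)) = 0 := by
      apply Finset.sum_eq_zero
      intro k hkk
      rw [hk k (Finset.mem_range.mp hkk)]
      simp
    rw [hz, ha, h0]
    simp [pow_succ]
  rw [Finset.sum_sub_distrib, K1, K2] at hdiff
  have hb1 := (hbd a).2
  have hb2 := (hbd (j + 1)).2
  have hb3 := (hbd (a + (j + 1))).1
  have hppos : (0:ℝ) < β⁻¹ ^ (j + 1) := pow_pos (by positivity) _
  have hinvpos : (0:ℝ) < 1/β := by positivity
  have h1b : (0:ℝ) < 1 - 1/β := by linarith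
  have hkey : β⁻¹ ^ (j + 1) * (1 - 1/β)
      ≤ β⁻¹ ^ (j + 1) * (1 + (Tb β)^[a + (j + 1)] 1 - (Tb β)^[j + 1] 1) := by
    apply mul_le_mul_of_nonneg_left _ (le_of_lt hppos)
    linarith
  have hkey2 : (0:ℝ) < β⁻¹ ^ (j + 1) * (1 - 1/β) := mul_pos hppos h1b
  nlinarith [hb1, hdiff, hkey, hkey2]

/-- no `1 w 1` together with `0 w 0`. -/
lemma no1w1 (a b m : ℕ) (ha : dB1 β a = 1) (hb : dB1 β b = 0)
    (hmid : ∀ k, 1 ≤ k → k ≤ m → dB1 β (a + k) = dB1 β (b + k))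
    (ha' : dB1 β (a + (m + 1)) = 1) (hb' : dB1 β (b + (m + 1)) = 0) : False := by
  have hβ0 : (0:ℝ) < β := by linarith
  have h1β : 1/β < 1 := by rw [div_lt_one hβ0]; linarith
  have K1 := key hβ1 a (m + 2)
  have K2 := key hβ1 b (m + 2)
  have hdiff : ∑ k ∈ Finset.range (m + 2), ((dB1 β (a + k) : ℝ) * β⁻¹ ^ (k + 1)
        - (dB1 β (b + k) : ℝ) * β⁻¹ ^ (k + 1)) = β⁻¹ + β⁻¹ ^ (m + 2) := by
    rw [Finset.sum_range_succ, Finset.sum_range_succ']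
    have hz : ∑ k ∈ Finset.range m, ((dB1 β (a + (k + 1)) : ℝ) * β⁻¹ ^ ((k + 1) + 1)
        - (dB1 β (b + (k + 1)) : ℝ) * β⁻¹ ^ ((k + 1) + 1)) = 0 := by
      apply Finset.sum_eq_zero
      intro k hkk
      have hkm := Finset.mem_range.mp hkk
      rw [hmid (k + 1) (by omega) (by omega)]
      simp
    rw [hz, ha', hb']
    simp only [Nat.add_zero, ha, hb]
    push_cast
    ring
  rw [Finset.sum_sub_distrib, K1, K2] at hdiff
  have hb1 := (hbd a).2
  have hb2 := (hbd b).1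
  have hb3 := (hbd (b + (m + 2))).2
  have hb4 := (hbd (a + (m + 2))).1
  have hppos : (0:ℝ) < β⁻¹ ^ (m + 2) := pow_pos (by positivity) _
  have hinv : β⁻¹ < 1 := by
    rw [inv_lt_one_iff₀]; right; exact hβ1
  have hbinv : 1/β = β⁻¹ := one_div β
  -- LHS = (x a - x b) + (x(b+m+2) - x(a+m+2)) * p ≤ 1/β + (1/β) p < 1/β + p
  nlinarith [hdiff, hppos, hb1, hb2, hb3, hb4]
end

section
variable {β : ℝ}

lemma Wadd (a p q : ℕ) : W β a (p + q) = W β a p + W β (a + p) q := by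
  unfold W
  rw [Finset.sum_range_add]
  congr 1
  apply Finset.sum_congr rfl
  intro k _
  congr 1
  omega

variable (hβ1 : 1 < β) (hβ2 : β < 2)
variable (hbd : ∀ n : ℕ, 1 - 1 / β ≤ (Tb β)^[n] 1 ∧ (Tb β)^[n] 1 ≤ 1)
include hβ1 hβ2 hbd

lemma balance : ∀ n : ℕ, ∀ a b : ℕ, W β a n ≤ W β b n + 1 := by
  intro n
  induction n using Nat.strong_induction_on with
  | _ n IH =>
    intro a b
    by_contra hcon
    push_neg at hcon
    -- hcon : W β b n + 1 < W β a n
    set D : ℕ → ℤ := fun j => W β a j - W β b j with hD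
    have hDstep : ∀ j, D (j + 1) = D j + (dB1 β (a + j) - dB1 β (b + j)) := by
      intro j
      simp only [hD, W, Finset.sum_range_succ]
      ring
    have hDn : 2 ≤ D n := by simp only [hD]; omega
    have hlt : ∀ j, j < n → D j ≤ 1 := by
      intro j hj
      have := IH j hj a b
      simp only [hD]; omega
    -- n = m + 2
    have hn2 : 2 ≤ n := by
      rcases n with _ | _ | n
      · simp only [hD, W, Finset.range_zero, Finset.sum_empty] at hDn; omega
      · have h1 := hDstep 0
        simp only [Nat.zero_add, Nat.add_zero] at h1
        simp only [Nat.zero_add] at hDn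
        have h0 : D 0 = 0 := by simp [hD, W]
        have e1 := e01 hβ1 hβ2 hbd a
        have e2 := e01 hβ1 hβ2 hbd b
        omega
      · omega
    obtain ⟨m, rfl⟩ : ∃ m, n = m + 2 := ⟨n - 2, by omega⟩
    have hmid : ∀ j, 1 ≤ j → j ≤ m + 1 → D j = 1 := by
      intro j h1j hjm
      have hup : D j ≤ 1 := hlt j (by omega)
      by_contra hne
      have hDj : D j ≤ 0 := by omega
      -- window from a+j, b+j of length m+2-j violates IH
      have hw := IH (m + 2 - j) (by omega) (a + j) (b + j)
      have hsplit1 : W β a (m + 2) = W β a j + W β (a + j) (m + 2 - j) := by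
        have := Wadd (β := β) a j (m + 2 - j)
        rw [show j + (m + 2 - j) = m + 2 by omega] at this
        exact this
      have hsplit2 : W β b (m + 2) = W β b j + W β (b + j) (m + 2 - j) := by
        have := Wadd (β := β) b j (m + 2 - j)
        rw [show j + (m + 2 - j) = m + 2 by omega] at this
        exact this
      simp only [hD] at hDj hDn
      omega
    have hD0 : D 0 = 0 := by simp [hD, W]
    have hD1 : D 1 = 1 := hmid 1 le_rfl (by omega)
    have hDm1 : D (m + 1) = 1 := hmid (m + 1) (by omega) le_rfl
    have ea := e01 hβ1 hβ2 hbd a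
    have eb := e01 hβ1 hβ2 hbd b
    have ea' := e01 hβ1 hβ2 hbd (a + (m + 1))
    have eb' := e01 hβ1 hβ2 hbd (b + (m + 1))
    have h1 := hDstep 0
    have h2 := hDstep (m + 1)
    simp only [Nat.zero_add, Nat.add_zero] at h1
    simp only [show m + 1 + 1 = m + 2 from rfl] at h2
    apply no1w1 hβ1 hβ2 hbd a b m
    · omega
    · omega
    · intro k hk1 hkm
      have hs := hDstep k
      have g1 : D k = 1 := hmid k hk1 (by omega)
      have g2 : D (k + 1) = 1 := hmid (k + 1) (by omega) (by omega)
      have eak := e01 hβ1 hβ2 hbd (a + k)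
      have ebk := e01 hβ1 hβ2 hbd (b + k)
      omega
    · omega
    · omega

lemma prefix_max : ∀ a n : ℕ, W β a n ≤ W β 0 n := by
  intro a n
  by_contra hcon
  push_neg at hcon
  have hex : ∃ j, j < n ∧ dB1 β (a + j) ≠ dB1 β j := by
    by_contra hall
    push_neg at hall
    have : W β a n = W β 0 n := by
      unfold W
      apply Finset.sum_congr rfl
      intro k hk
      rw [Nat.zero_add, hall k (Finset.mem_range.mp hk)]
    omega
  classical
  have hexists : ∃ j, dB1 β (a + j) ≠ dB1 β j := ⟨hex.choose, hex.choose_spec.2⟩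
  set j := Nat.find hexists with hjdef
  have hjspec : dB1 β (a + j) ≠ dB1 β j := Nat.find_spec hexists
  have hjmin : ∀ k, k < j → dB1 β (a + k) = dB1 β k := fun k hk =>
    not_not.mp (Nat.find_min hexists hk)
  have hjn : j < n := lt_of_le_of_lt (Nat.find_le hex.choose_spec.2) hex.choose_spec.1
  have eaj := e01 hβ1 hβ2 hbd (a + j)
  have ej := e01 hβ1 hβ2 hbd j
  rcases eaj with eaj | eaj <;> rcases ej with ej | ej
  · exact hjspec (by omega)
  · -- e(a+j)=0, e j = 1 : balance violation
    have hsum_eq : ∑ k ∈ Finset.range j, dB1 β (0 + k)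
        = ∑ k ∈ Finset.range j, dB1 β (a + k) :=
      Finset.sum_congr rfl (fun k hk => by
        rw [Nat.zero_add, hjmin k (Finset.mem_range.mp hk)])
    have hWj : W β 0 (j + 1) = W β a (j + 1) + 1 := by
      unfold W
      rw [Finset.sum_range_succ, Finset.sum_range_succ, hsum_eq, Nat.zero_add, ej, eaj]
      omega
    have hsplitA : W β a n = W β a (j + 1) + W β (a + (j + 1)) (n - (j + 1)) := by
      have := Wadd (β := β) a (j + 1) (n - (j + 1))
      rw [show (j + 1) + (n - (j + 1)) = n by omega] at this
      exact this
    have hsplit0 : W β 0 n = W β 0 (j + 1) + W β (0 + (j + 1)) (n - (j + 1)) := by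
      have := Wadd (β := β) 0 (j + 1) (n - (j + 1))
      rw [show (j + 1) + (n - (j + 1)) = n by omega] at this
      exact this
    have hbal := balance hβ1 hβ2 hbd (n - (j + 1)) (a + (j + 1)) (0 + (j + 1))
    omega
  · exact lexmax hβ1 hβ2 hbd a j hjmin eaj ej
  · exact hjspec (by omega)

end

section
variable {β : ℝ}

lemma Wblocks (m a n : ℕ) : W β a (m * n) = ∑ j ∈ Finset.range m, W β (a + j * n) n := by
  induction m with
  | zero => simp [W]
  | succ m ih =>
      rw [show (m + 1) * n = m * n + n by ring, Wadd, ih, Finset.sum_range_succ]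

variable (hβ1 : 1 < β) (hβ2 : β < 2)
variable (hbd : ∀ n : ℕ, 1 - 1 / β ≤ (Tb β)^[n] 1 ∧ (Tb β)^[n] 1 ≤ 1)
include hβ1 hβ2 hbd

lemma keyineq (n m : ℕ) (hn : 1 ≤ n) (hm : 1 ≤ m) :
    (m : ℤ) * W β 0 n ≤ (n : ℤ) * W β 0 m + ((m : ℤ) - 1) := by
  have hupper : W β 0 (n * m) ≤ (n : ℤ) * W β 0 m := by
    have h1 := Wblocks (β := β) n 0 m
    simp only [Nat.zero_add] at h1
    rw [h1]
    calc ∑ i ∈ Finset.range n, W β (i * m) m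
        ≤ ∑ _i ∈ Finset.range n, W β 0 m :=
          Finset.sum_le_sum (fun i _ => prefix_max hβ1 hβ2 hbd (i * m) m)
      _ = (n : ℤ) * W β 0 m := by
          rw [Finset.sum_const, Finset.card_range, nsmul_eq_mul]
  obtain ⟨m', rfl⟩ : ∃ m', m = m' + 1 := ⟨m - 1, by omega⟩
  have hlower : W β 0 n + (m' : ℤ) * (W β 0 n - 1) ≤ W β 0 ((m' + 1) * n) := by
    have h1 := Wblocks (β := β) (m' + 1) 0 n
    simp only [Nat.zero_add] at h1
    rw [h1, Finset.sum_range_succ']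
    have h2 : (m' : ℤ) * (W β 0 n - 1) ≤ ∑ j ∈ Finset.range m', W β ((j + 1) * n) n := by
      calc (m' : ℤ) * (W β 0 n - 1)
          = ∑ _j ∈ Finset.range m', (W β 0 n - 1) := by
            rw [Finset.sum_const, Finset.card_range, nsmul_eq_mul]
        _ ≤ ∑ j ∈ Finset.range m', W β ((j + 1) * n) n :=
            Finset.sum_le_sum (fun j _ => by
              have := balance hβ1 hβ2 hbd n 0 ((j + 1) * n)
              omega)
    have h3 : W β (0 * n) n = W β 0 n := by norm_num
    omega
  have hcomm : W β 0 ((m' + 1) * n) = W β 0 (n * (m' + 1)) := by rw [Nat.mul_comm]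
  push_cast
  nlinarith [hupper, hlower, hcomm]

end

/-- integer sequences with bounded "potential": increments eventually vanish. -/
lemma evconst (q : ℕ) (hq : 0 < q) (t d : ℕ → ℤ)
    (ht : ∀ n, 0 ≤ t n ∧ t n ≤ q) (hd : ∀ n, d n = 0 ∨ d n = 1)
    (hrec : ∀ n, t (n + q) = t n + q * d n) :
    ∃ N, ∀ n, N ≤ n → d n = 0 := by
  classical
  have hsum : ∀ K n, t (n + K * q) = t n + q * ∑ j ∈ Finset.range K, d (n + j * q) := by
    intro K
    induction K with
    | zero => simp
    | succ K ih =>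
        intro n
        rw [show n + (K + 1) * q = (n + K * q) + q by ring, hrec, ih n,
          Finset.sum_range_succ]
        ring
  have hkey : ∀ n k, d n = 1 → d (n + (k + 1) * q) = 1 → False := by
    intro n k h1 h2
    have hs := hsum (k + 2) n
    have hge : (2 : ℤ) ≤ ∑ j ∈ Finset.range (k + 2), d (n + j * q) := by
      have hsub : ({0, k + 1} : Finset ℕ) ⊆ Finset.range (k + 2) := by
        intro x hx
        simp only [Finset.mem_insert, Finset.mem_singleton] at hx
        rcases hx with rfl | rfl <;> simp
      have hmono := Finset.sum_le_sum_of_subset_of_nonneg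
        (f := fun j => d (n + j * q)) hsub
        (fun i _ _ => by have h := hd (n + i * q); omega)
      rw [Finset.sum_pair (by omega : (0:ℕ) ≠ k + 1)] at hmono
      simp only [Nat.zero_mul, Nat.add_zero] at hmono
      omega
    have h1t := (ht n).1
    have h2t := (ht (n + (k + 2) * q)).2
    have hmul : (q : ℤ) * 2 ≤ q * ∑ j ∈ Finset.range (k + 2), d (n + j * q) :=
      mul_le_mul_of_nonneg_left hge (by positivity)
    have hq1 : (1 : ℤ) ≤ (q : ℤ) := by exact_mod_cast hq
    linarith [hs, h1t, h2t, hmul]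
  have hmain : ∀ n1 n2, d n1 = 1 → d n2 = 1 → n1 < n2 → n1 % q = n2 % q → False := by
    intro n1 n2 h1 h2 hlt heq
    have hdvd : q ∣ n2 - n1 := (Nat.modEq_iff_dvd' (le_of_lt hlt)).mp heq
    obtain ⟨k, hk⟩ := hdvd
    rcases k with _ | k'
    · omega
    · apply hkey n1 k' h1
      have hn2 : n1 + (k' + 1) * q = n2 := by
        have h' : n2 = q * (k' + 1) + n1 := (Nat.sub_eq_iff_eq_add (le_of_lt hlt)).mp hk
        rw [h']; ring
      rw [hn2]; exact h2
  have hfin : {n : ℕ | d n = 1}.Finite := by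
    apply Set.Finite.of_finite_image (f := (· % q))
    · apply Set.Finite.subset (Set.finite_Iio q)
      rintro x ⟨y, _, rfl⟩
      exact Nat.mod_lt y hq
    · intro n1 h1 n2 h2 heq
      rcases lt_trichotomy n1 n2 with h | h | h
      · exact absurd (hmain n1 n2 h1 h2 h heq) (fun x => x)
      · exact h
      · exact absurd (hmain n2 n1 h2 h1 h heq.symm) (fun x => x)
  obtain ⟨N, hN⟩ := hfin.bddAbove
  refine ⟨N + 1, fun n hn => ?_⟩
  rcases hd n with h | h
  · exact h
  · exact absurd (hN h) (by omega)

end S8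

theorem stmt8 (β : ℝ) (hβ1 : 1 < β) (hβ2 : β < 2)
    (hap : ¬ EventuallyPeriodic (dB1 β))
    (hbd : ∀ n : ℕ, 1 - 1 / β ≤ (Tb β)^[n] 1 ∧ (Tb β)^[n] 1 ≤ 1) :
    ∃ α : ℝ, Irrational α ∧ 0 < α ∧ α < 1 ∧ ∀ n : ℕ, dB1 β n = sUp α 0 n := by
  classical
  set S : ℕ → ℤ := fun n => S8.W β 0 n with hSdef
  have hS0 : S 0 = 0 := by simp [hSdef, S8.W]
  have hS1 : S 1 = 1 := by
    have h0 : dB1 β 0 = 1 := by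
      rw [dB1, Function.iterate_zero_apply, mul_one, Int.floor_eq_iff]
      constructor
      · exact_mod_cast hβ1.le
      · push_cast; linarith
    simp [hSdef, S8.W, h0]
  have hE : ∀ n : ℕ, dB1 β n = S (n + 1) - S n := by
    intro n
    simp only [hSdef, S8.W, Finset.sum_range_succ, Nat.zero_add]
    ring
  have hstrict : ∀ n m : ℕ, 1 ≤ n → 1 ≤ m →
      ((S n : ℝ) - 1) / n < (S m : ℝ) / m := by
    intro n m hn hm
    have hk := S8.keyineq hβ1 hβ2 hbd n m hn hm
    have hnp : (0:ℝ) < n := by exact_mod_cast hn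
    have hmp : (0:ℝ) < m := by exact_mod_cast hm
    rw [div_lt_div_iff₀ hnp hmp]
    have hcast : (m : ℝ) * S n ≤ (n : ℝ) * S m + ((m : ℝ) - 1) := by exact_mod_cast hk
    nlinarith
  set A : Set ℝ := {x | ∃ n : ℕ, 1 ≤ n ∧ x = ((S n : ℝ) - 1) / n} with hAdef
  set B : Set ℝ := {x | ∃ n : ℕ, 1 ≤ n ∧ x = (S n : ℝ) / n} with hBdef
  have hAne : A.Nonempty := ⟨_, 1, le_rfl, rfl⟩
  have hBne : B.Nonempty := ⟨_, 1, le_rfl, rfl⟩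
  have hAB : ∀ x ∈ A, ∀ y ∈ B, x < y := by
    rintro x ⟨n, hn, rfl⟩ y ⟨m, hm, rfl⟩
    exact hstrict n m hn hm
  have hbddA : BddAbove A := ⟨(S 1 : ℝ) / ((1:ℕ):ℝ), fun x hx => (hAB x hx _ ⟨1, le_rfl, rfl⟩).le⟩
  have hbddB : BddBelow B := ⟨((S 1 : ℝ) - 1) / ((1:ℕ):ℝ), fun y hy => (hAB _ ⟨1, le_rfl, rfl⟩ y hy).le⟩
  set L : ℝ := sSup A with hLdef
  set U : ℝ := sInf B with hUdef
  have hLU : L ≤ U := csSup_le hAne (fun x hx => le_csInf hBne (fun y hy => (hAB x hx y hy).le))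
  have hLa : ∀ n : ℕ, 1 ≤ n → ((S n : ℝ) - 1) / n ≤ L := fun n hn =>
    le_csSup hbddA ⟨n, hn, rfl⟩
  have hUb : ∀ n : ℕ, 1 ≤ n → U ≤ (S n : ℝ) / n := fun n hn =>
    csInf_le hbddB ⟨n, hn, rfl⟩
  obtain ⟨α, hirr, hprop⟩ : ∃ α : ℝ, Irrational α ∧
      ∀ n : ℕ, 1 ≤ n → ((S n : ℝ) - 1 < α * n ∧ α * n < (S n : ℝ)) := by
    rcases lt_or_eq_of_le hLU with hlt | heq
    · obtain ⟨α, hirr, h1, h2⟩ := exists_irrational_btwn hlt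
      refine ⟨α, hirr, fun n hn => ?_⟩
      have hnp : (0:ℝ) < n := by exact_mod_cast hn
      constructor
      · have h := lt_of_le_of_lt (hLa n hn) h1
        rw [div_lt_iff₀ hnp] at h; linarith
      · have h := lt_of_lt_of_le h2 (hUb n hn)
        rw [lt_div_iff₀ hnp] at h; linarith
    · by_cases hIr : Irrational L
      · refine ⟨L, hIr, fun n hn => ?_⟩
        have hnp : (0:ℝ) < n := by exact_mod_cast hn
        constructor
        · have hle := hLa n hn
          have hne : ((S n : ℝ) - 1) / n ≠ L := by
            intro hcontra
            exact hIr ⟨((S n - 1 : ℤ) : ℚ) / (n : ℚ), by push_cast [← hcontra]; ring⟩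
          have h := lt_of_le_of_ne hle hne
          rw [div_lt_iff₀ hnp] at h; linarith
        · have hle : L ≤ (S n : ℝ) / n := heq ▸ hUb n hn
          have hne : L ≠ (S n : ℝ) / n := by
            intro hcontra
            exact hIr ⟨((S n : ℤ) : ℚ) / (n : ℚ), by push_cast [hcontra]; ring⟩
          have h := lt_of_le_of_ne hle hne
          rw [lt_div_iff₀ hnp] at h; linarith
      · -- L = U is rational : derive eventual periodicity, contradiction
        exfalso
        rw [Irrational, not_not] at hIr
        obtain ⟨r, hr⟩ := hIr
        set q : ℕ := r.den with hqdef
        set p : ℤ := r.num with hpdef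
        have hqpos : 0 < q := r.pos
        have hqp : (0:ℝ) < q := by exact_mod_cast hqpos
        have hrpq : L = (p : ℝ) / (q : ℝ) := by rw [← hr, Rat.cast_def]
        set t : ℕ → ℤ := fun n => q * S n - p * n with htdef
        have ht : ∀ n, 0 ≤ t n ∧ t n ≤ q := by
          intro n
          rcases Nat.eq_zero_or_pos n with rfl | hn
          · have h0 : t 0 = 0 := by simp [htdef, hS0]
            have hq1 : (1:ℤ) ≤ q := by exact_mod_cast hqpos
            omega
          · have hnp : (0:ℝ) < n := by exact_mod_cast hn
            have h1 : ((S n : ℝ) - 1) / n ≤ (p : ℝ) / q := hrpq ▸ hLa n hn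
            have h2 : (p : ℝ) / q ≤ (S n : ℝ) / n := by
              have := hUb n hn
              rw [← heq, hrpq] at this
              exact this
            rw [div_le_div_iff₀ hnp hqp] at h1
            rw [div_le_div_iff₀ hqp hnp] at h2
            constructor
            · have : (p : ℝ) * n ≤ (q : ℝ) * S n := by linarith
              have hz : (p : ℤ) * n ≤ (q : ℤ) * S n := by exact_mod_cast this
              simp only [htdef]; omega
            · have : (q : ℝ) * S n - (p : ℝ) * n ≤ q := by nlinarith
              have hz : (q : ℤ) * S n - (p : ℤ) * n ≤ q := by exact_mod_cast this
              simp only [htdef]; omega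
        set u : ℕ → ℤ := fun n => S8.W β n q with hudef
        have hstep : ∀ n, S (n + q) = S n + u n := by
          intro n
          have := S8.Wadd (β := β) 0 n q
          simpa [hSdef, hudef] using this
        have htrec : ∀ n, t (n + q) = t n + q * (u n - p) := by
          intro n
          simp only [htdef, hstep n]
          push_cast
          ring
        have hub : ∀ n, p - 1 ≤ u n ∧ u n ≤ p + 1 := by
          intro n
          have h1 := (ht n).1
          have h2 := (ht n).2
          have h3 := (ht (n + q)).1
          have h4 := (ht (n + q)).2
          have h5 := htrec n
          have hq1 : (1:ℤ) ≤ q := by exact_mod_cast hqpos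
          constructor
          · by_contra hcon
            push_neg at hcon
            have : u n - p ≤ -2 := by omega
            nlinarith
          · by_contra hcon
            push_neg at hcon
            have : 2 ≤ u n - p := by omega
            nlinarith
        have hurange : ∀ n, S q - 1 ≤ u n ∧ u n ≤ S q := by
          intro n
          constructor
          · have := S8.balance hβ1 hβ2 hbd q 0 n
            simp only [hSdef, hudef] at *
            omega
          · exact S8.prefix_max hβ1 hβ2 hbd n q
        have hconst : ∃ c N, ∀ n, N ≤ n → u n = c := by
          by_cases hc1 : S q ≤ p - 1
          · refine ⟨p - 1, 0, fun n _ => ?_⟩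
            have := hurange n; have := hub n; omega
          · by_cases hc2 : p + 2 ≤ S q
            · refine ⟨p + 1, 0, fun n _ => ?_⟩
              have := hurange n; have := hub n; omega
            · have hSq : S q = p ∨ S q = p + 1 := by omega
              rcases hSq with hSq | hSq
              · -- decreasing potential
                obtain ⟨N, hN⟩ := S8.evconst q hqpos (fun n => q - t n) (fun n => p - u n)
                  (fun n => by have h := ht n; omega)
                  (fun n => by have h1 := hurange n; have h2 := hub n; omega)
                  (fun n => by have h := htrec n; linear_combination (-1 : ℤ) * h)
                exact ⟨p, N, fun n hn => by have := hN n hn; omega⟩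
              · -- increasing potential
                obtain ⟨N, hN⟩ := S8.evconst q hqpos t (fun n => u n - p)
                  (fun n => ht n)
                  (fun n => by have h1 := hurange n; have h2 := hub n; omega)
                  (fun n => by exact htrec n)
                exact ⟨p, N, fun n hn => by have := hN n hn; omega⟩
        obtain ⟨c, N, hcN⟩ := hconst
        apply hap
        refine ⟨N, q, hqpos, fun n hn => ?_⟩
        have h1 := hstep (n + 1)
        have h2 := hstep n
        have e1 := hE (n + q)
        have e2 := hE n
        have hidx : (n + q) + 1 = (n + 1) + q := by omega
        rw [hidx] at e1
        have hu1 : u (n + 1) = c := hcN (n + 1) (by omega)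
        have hu2 : u n = c := hcN n hn
        omega
  -- finish : α works
  have hα0 : 0 < α := by
    have := (hprop 1 le_rfl).1
    rw [hS1] at this; push_cast at this; linarith
  have hα1 : α < 1 := by
    have := (hprop 1 le_rfl).2
    rw [hS1] at this; push_cast at this; linarith
  refine ⟨α, hirr, hα0, hα1, fun n => ?_⟩
  have hceil : ∀ m : ℕ, ⌈α * m⌉ = S m := by
    intro m
    rcases Nat.eq_zero_or_pos m with rfl | hm
    · simp [hS0]
    · rw [Int.ceil_eq_iff]
      constructor
      · have := (hprop m hm).1; push_cast; linarith
      · have := (hprop m hm).2; push_cast; linarith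
  rw [sUp]
  have hc1 : α * ((n : ℝ) + 1) + 0 = α * ((n + 1 : ℕ) : ℝ) := by push_cast; ring
  have hc2 : α * (n : ℝ) + 0 = α * ((n : ℕ) : ℝ) := by ring
  rw [hc1, hc2, hceil (n + 1), hceil n, hE n]
end

section
/- For every real number β ∈ (1,2], either the set {T_β^n(1) : n ≥ 0} is finite, or the diameter of its closure is at least 1/β. -/
lemma Tb_key (β u v D : ℝ) (hβ0 : 0 < β) (huv : dist u v ≤ D)
    (hfl : ⌊β * u⌋ < ⌊β * v⌋) : 1 - β * D ≤ dist (Tb β u) (Tb β v) := by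
  have habs : |β * u - β * v| ≤ β * D := by
    rw [show β * u - β * v = β * (u - v) by ring, abs_mul, abs_of_pos hβ0]
    rw [Real.dist_eq] at huv
    exact mul_le_mul_of_nonneg_left huv hβ0.le
  have h1 : -(β * D) ≤ β * u - β * v := by
    have := neg_abs_le (β * u - β * v)
    linarith
  have h2 : (1 : ℝ) ≤ (⌊β * v⌋ : ℝ) - (⌊β * u⌋ : ℝ) := by
    have h2' : (⌊β * u⌋ : ℝ) + 1 ≤ (⌊β * v⌋ : ℝ) := by exact_mod_cast hfl
    linarith
  have h3 : 1 - β * D ≤ Tb β u - Tb β v := by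
    unfold Tb; linarith
  calc 1 - β * D ≤ Tb β u - Tb β v := h3
    _ ≤ |Tb β u - Tb β v| := le_abs_self _
    _ = dist (Tb β u) (Tb β v) := (Real.dist_eq _ _).symm

lemma Tb_step (β u v D : ℝ) (hβ0 : 0 < β) (huv : dist u v ≤ D) :
    dist (Tb β u) (Tb β v) = β * dist u v ∨ 1 - β * D ≤ dist (Tb β u) (Tb β v) := by
  rcases lt_trichotomy ⌊β * u⌋ ⌊β * v⌋ with h | h | h
  · exact Or.inr (Tb_key β u v D hβ0 huv h)
  · left
    have he : Tb β u - Tb β v = β * (u - v) := by unfold Tb; rw [h]; ring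
    rw [Real.dist_eq, Real.dist_eq, he, abs_mul, abs_of_pos hβ0]
  · refine Or.inr ?_
    rw [dist_comm]
    exact Tb_key β v u D hβ0 (by rwa [dist_comm]) h

theorem stmt9 (β : ℝ) (hβ1 : 1 < β) (hβ2 : β ≤ 2) :
    Set.Finite {x : ℝ | ∃ n : ℕ, (Tb β)^[n] 1 = x} ∨
      1 / β ≤ Metric.diam (closure {x : ℝ | ∃ n : ℕ, (Tb β)^[n] 1 = x}) := by
  by_cases hfin : Set.Finite {x : ℝ | ∃ n : ℕ, (Tb β)^[n] 1 = x}
  · exact Or.inl hfin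
  · right
    by_contra hlt
    push_neg at hlt
    set S := {x : ℝ | ∃ n : ℕ, (Tb β)^[n] 1 = x} with hSdef
    set f : ℕ → ℝ := fun n => (Tb β)^[n] 1 with hf
    have hβ0 : (0:ℝ) < β := lt_trans one_pos hβ1
    have hmem : ∀ n, f n ∈ S := fun n => ⟨n, rfl⟩
    have hfsucc : ∀ n, f (n+1) = Tb β (f n) := fun n => Function.iterate_succ_apply' _ _ _
    have hIcc : ∀ n, f n ∈ Set.Icc (0:ℝ) 1 := by
      intro n
      cases n with
      | zero => simp [hf]
      | succ m =>
        rw [hfsucc m, show Tb β (f m) = Int.fract (β * (f m)) from rfl]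
        exact ⟨Int.fract_nonneg _, (Int.fract_lt_one _).le⟩
    have hsub : S ⊆ Set.Icc (0:ℝ) 1 := by
      rintro x ⟨n, rfl⟩; exact hIcc n
    have hbdd : Bornology.IsBounded (closure S) :=
      ((Metric.isBounded_Icc (0:ℝ) 1).subset hsub).closure
    set D := Metric.diam (closure S) with hD
    have hdist : ∀ x ∈ S, ∀ y ∈ S, dist x y ≤ D := fun x hx y hy =>
      Metric.dist_le_diam_of_mem hbdd (subset_closure hx) (subset_closure hy)
    have hβD : β * D < 1 := by
      have h1 : β * D < β * (1/β) := mul_lt_mul_of_pos_left hlt hβ0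
      rwa [mul_one_div_cancel hβ0.ne'] at h1
    set δ : ℝ := 1 - β * D with hδdef
    have hδ : 0 < δ := by simp only [hδdef]; linarith
    -- eventual separation of any distinct pair of orbit points
    have hfar : ∀ a b : ℕ, f a ≠ f b →
        ∃ N, ∀ m, N ≤ m → δ ≤ dist (f (a+m)) (f (b+m)) := by
      intro a b hne
      have hd : ∀ m, dist (f (a+m)) (f (b+m)) ≤ D := fun m => hdist _ (hmem _) _ (hmem _)
      have hstep : ∀ m, dist (f (a+(m+1))) (f (b+(m+1))) = β * dist (f (a+m)) (f (b+m)) ∨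
          δ ≤ dist (f (a+(m+1))) (f (b+(m+1))) := by
        intro m
        have e1 : f (a+(m+1)) = Tb β (f (a+m)) := hfsucc (a+m)
        have e2 : f (b+(m+1)) = Tb β (f (b+m)) := hfsucc (b+m)
        rw [e1, e2]
        exact Tb_step β _ _ D hβ0 (hd m)
      have hup : ∀ m, δ ≤ dist (f (a+m)) (f (b+m)) →
          δ ≤ dist (f (a+(m+1))) (f (b+(m+1))) := by
        intro m hm
        rcases hstep m with h | h
        · rw [h]
          have hnn : (0:ℝ) ≤ dist (f (a+m)) (f (b+m)) := dist_nonneg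
          nlinarith
        · exact h
      have hex : ∃ m, δ ≤ dist (f (a+m)) (f (b+m)) := by
        by_contra hc
        push_neg at hc
        have hgeo : ∀ m, dist (f (a+m)) (f (b+m)) = β ^ m * dist (f a) (f b) := by
          intro m
          induction m with
          | zero => simp
          | succ k ih =>
            rcases hstep k with h | h
            · rw [h, ih]; ring
            · exact absurd h (not_le.mpr (hc _))
        have hd0 : 0 < dist (f a) (f b) := dist_pos.mpr hne
        obtain ⟨m, hm⟩ := pow_unbounded_of_one_lt (D / dist (f a) (f b)) hβ1
        have hDlt : D < β ^ m * dist (f a) (f b) := by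
          rw [div_lt_iff₀ hd0] at hm; linarith
        have := hd m
        rw [hgeo m] at this
        linarith
      obtain ⟨m0, hm0⟩ := hex
      refine ⟨m0, ?_⟩
      intro m hm
      induction m, hm using Nat.le_induction with
      | base => exact hm0
      | succ n hn ih => exact hup n ih
    -- f is injective (otherwise the orbit set is finite)
    have finj : Function.Injective f := by
      intro a b hab
      by_contra hne
      apply hfin
      -- wlog a < b
      obtain ⟨a, b, hab, hlt'⟩ : ∃ a b : ℕ, f a = f b ∧ a < b := by
        rcases Ne.lt_or_gt hne with h | h
        · exact ⟨a, b, hab, h⟩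
        · exact ⟨b, a, hab.symm, h⟩
      have hcover : ∀ n, ∃ m, m < b ∧ f m = f n := by
        intro n
        induction n using Nat.strong_induction_on with
        | _ n ih =>
          by_cases hnb : n < b
          · exact ⟨n, hnb, rfl⟩
          · push_neg at hnb
            have hkey : f n = f (n - b + a) := by
              have h1 : n = (n - b) + b := (Nat.sub_add_cancel hnb).symm
              calc f n = (Tb β)^[(n - b) + b] 1 := by rw [← h1]
                _ = (Tb β)^[n - b] ((Tb β)^[b] 1) := Function.iterate_add_apply _ _ _ _
                _ = (Tb β)^[n - b] (f b) := rfl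
                _ = (Tb β)^[n - b] (f a) := by rw [← hab]
                _ = (Tb β)^[n - b] ((Tb β)^[a] 1) := rfl
                _ = (Tb β)^[(n - b) + a] 1 := (Function.iterate_add_apply _ _ _ _).symm
                _ = f (n - b + a) := rfl
            have hlt2 : n - b + a < n := by omega
            obtain ⟨m, hm, he⟩ := ih _ hlt2
            exact ⟨m, hm, he.trans hkey.symm⟩
      have hsub2 : S ⊆ f '' Set.Iio b := by
        rintro x ⟨n, rfl⟩
        obtain ⟨m, hm, he⟩ := hcover n
        exact ⟨m, hm, he⟩
      exact ((Set.finite_Iio b).image f).subset hsub2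
    -- choose K0 with 1 < K0 * δ
    obtain ⟨K0, hK0⟩ : ∃ K0 : ℕ, 1 < (K0:ℝ) * δ := by
      obtain ⟨K0, h⟩ := exists_nat_gt (1/δ)
      refine ⟨K0, ?_⟩
      rw [div_lt_iff₀ hδ] at h
      linarith
    -- uniform separation time for all pairs below K0+1
    have hfar' : ∀ i j : ℕ, ∃ N, ∀ m, N ≤ m → i < j → δ ≤ dist (f (i+m)) (f (j+m)) := by
      intro i j
      by_cases hij : i < j
      · obtain ⟨N, hN⟩ := hfar i j (fun h => absurd (finj h) (Nat.ne_of_lt hij))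
        exact ⟨N, fun m hm _ => hN m hm⟩
      · exact ⟨0, fun m _ h => absurd h hij⟩
    choose N hN using hfar'
    set M := Finset.sup (Finset.range (K0+1) ×ˢ Finset.range (K0+1)) (fun p => N p.1 p.2)
      with hM
    set x : ℕ → ℝ := fun i => f (i + M) with hx
    have hxinj : Function.Injective x := by
      intro a b hab
      have h2 : a + M = b + M := finj hab
      omega
    have hsep : ∀ i j, i < K0+1 → j < K0+1 → i ≠ j → δ ≤ dist (x i) (x j) := by
      intro i j hi hj hij
      have hmain : ∀ i j, i < K0+1 → j < K0+1 → i < j → δ ≤ dist (x i) (x j) := by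
        intro i j hi hj hlt'
        have hmem' : (i, j) ∈ Finset.range (K0+1) ×ˢ Finset.range (K0+1) :=
          Finset.mem_product.mpr ⟨Finset.mem_range.mpr hi, Finset.mem_range.mpr hj⟩
        have hle : N i j ≤ M := Finset.le_sup (f := fun p : ℕ × ℕ => N p.1 p.2) hmem'
        exact hN i j M hle hlt'
      rcases Nat.lt_or_ge i j with h | h
      · exact hmain i j hi hj h
      · have h' : j < i := lt_of_le_of_ne h (Ne.symm hij)
        rw [dist_comm]
        exact hmain j i hj hi h'
    set s : Finset ℝ := (Finset.range (K0+1)).image x with hs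
    have hcard : s.card = K0+1 := by
      rw [hs, Finset.card_image_of_injective _ hxinj, Finset.card_range]
    set e : Fin (K0+1) → ℝ := fun i => ((s.orderIsoOfFin hcard) i : ℝ) with he
    have hemem : ∀ i, e i ∈ s := fun i => ((s.orderIsoOfFin hcard) i).2
    have hmono : StrictMono e := fun i j hij =>
      Subtype.coe_lt_coe.mpr ((s.orderIsoOfFin hcard).strictMono hij)
    have heIcc : ∀ i, e i ∈ Set.Icc (0:ℝ) 1 := by
      intro i
      obtain ⟨a, _, hae⟩ := Finset.mem_image.mp (hemem i)
      rw [← hae]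
      exact hIcc _
    have hesep : ∀ i j : Fin (K0+1), e i ≠ e j → δ ≤ dist (e i) (e j) := by
      intro i j hne
      obtain ⟨a, ha, hae⟩ := Finset.mem_image.mp (hemem i)
      obtain ⟨b, hb, hbe⟩ := Finset.mem_image.mp (hemem j)
      have hab : a ≠ b := by
        rintro rfl
        exact hne (hae ▸ hbe ▸ rfl)
      rw [← hae, ← hbe]
      exact hsep a b (Finset.mem_range.mp ha) (Finset.mem_range.mp hb) hab
    have hchain : ∀ i : ℕ, ∀ h : i < K0+1,
        (i:ℝ) * δ ≤ e ⟨i, h⟩ - e ⟨0, Nat.succ_pos _⟩ := by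
      intro i
      induction i with
      | zero => intro h; simp
      | succ k ih =>
        intro h
        have hk : k < K0+1 := Nat.lt_of_succ_lt h
        have h1 : e ⟨k, hk⟩ < e ⟨k+1, h⟩ := hmono (by simp [Fin.lt_def])
        have h2 : δ ≤ dist (e ⟨k+1, h⟩) (e ⟨k, hk⟩) := hesep _ _ (ne_of_gt h1)
        rw [Real.dist_eq, abs_of_pos (by linarith)] at h2
        have h3 := ih hk
        push_cast
        linarith
    have h0 := heIcc ⟨0, Nat.succ_pos _⟩
    have hKm := heIcc ⟨K0, Nat.lt_succ_self _⟩
    have hch := hchain K0 (Nat.lt_succ_self _)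
    have : (K0:ℝ) * δ ≤ 1 := by
      have := h0.1
      have := hKm.2
      linarith
    linarith
end

section
/- For every real number β > 1, either the sequence d_β(1) is eventually periodic, or the diameter of the set {T_β^n(1) : n ≥ 0} is at least 1/β. -/
lemma Tb_eq_fract (β x : ℝ) : Tb β x = Int.fract (β * x) := rfl

lemma Tb_iter_mem (β : ℝ) (n : ℕ) : (Tb β)^[n] 1 ∈ Set.Icc (0:ℝ) 1 := by
  cases n with
  | zero => simp
  | succ n =>
    rw [Function.iterate_succ_apply', Tb_eq_fract]
    exact ⟨Int.fract_nonneg _, (Int.fract_lt_one _).le⟩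

lemma Tb_rec (β : ℝ) (n : ℕ) :
    (Tb β)^[n + 1] 1 = β * (Tb β)^[n] 1 - dB1 β n := by
  rw [Function.iterate_succ_apply']; rfl

lemma dB1_nonneg (β : ℝ) (hβ : 1 < β) (n : ℕ) : 0 ≤ dB1 β n :=
  Int.floor_nonneg.2 (mul_nonneg (by linarith) (Tb_iter_mem β n).1)

lemma dB1_le (β : ℝ) (hβ : 1 < β) (n : ℕ) : dB1 β n ≤ ⌊β⌋ := by
  apply Int.floor_le_floor
  nlinarith [(Tb_iter_mem β n).1, (Tb_iter_mem β n).2]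

/-- Expansion: if digits match for `n` steps, the difference expands by `β^n`. -/
lemma expand (β : ℝ) (i j n : ℕ)
    (h : ∀ k, 1 ≤ k → k ≤ n → dB1 β (i + k) = dB1 β (j + k)) :
    (Tb β)^[i+1+n] 1 - (Tb β)^[j+1+n] 1 = β^n * ((Tb β)^[i+1] 1 - (Tb β)^[j+1] 1) := by
  induction n with
  | zero => simp
  | succ n ih =>
    have hd : dB1 β (i + (n+1)) = dB1 β (j + (n+1)) := h (n+1) (by omega) le_rfl
    have hi : i + 1 + (n+1) = (i + (n+1)) + 1 := by ring
    have hj : j + 1 + (n+1) = (j + (n+1)) + 1 := by ring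
    rw [hi, hj, Tb_rec, Tb_rec, hd]
    have ih' := ih (fun k hk1 hk2 => h k hk1 (by omega))
    have e1 : i + (n+1) = i + 1 + n := by ring
    have e2 : j + (n+1) = j + 1 + n := by ring
    rw [e1, e2]
    linear_combination β * ih'

/-- If digits disagree at `i, j` but agree for the next `n` steps, the orbit points
are at distance at least `1/β - (1/β)^(n+1)`. -/
lemma gap (β : ℝ) (hβ : 1 < β) (i j n : ℕ)
    (h : ∀ k, 1 ≤ k → k ≤ n → dB1 β (i + k) = dB1 β (j + k))
    (hne : dB1 β i ≠ dB1 β j) :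
    1/β - 1/β * (1/β)^n ≤ |(Tb β)^[i] 1 - (Tb β)^[j] 1| := by
  have hβ0 : (0:ℝ) < β := by linarith
  have hpow : (0:ℝ) < β ^ n := pow_pos hβ0 n
  have hexp := expand β i j n h
  have hb1 : |(Tb β)^[i+1+n] 1 - (Tb β)^[j+1+n] 1| ≤ 1 := by
    have a := Tb_iter_mem β (i+1+n); have b := Tb_iter_mem β (j+1+n)
    rw [abs_le]
    constructor <;> [linarith [a.1, b.2]; linarith [a.2, b.1]]
  have h2 : |(Tb β)^[i+1] 1 - (Tb β)^[j+1] 1| ≤ 1 / β^n := by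
    rw [hexp, abs_mul, abs_of_pos hpow] at hb1
    rw [le_div_iff₀ hpow]
    nlinarith [hb1]
  have hrec_i := Tb_rec β i
  have hrec_j := Tb_rec β j
  have hd : (1:ℝ) ≤ |(dB1 β i : ℝ) - (dB1 β j : ℝ)| := by
    have h1 : 1 ≤ |dB1 β i - dB1 β j| := Int.one_le_abs (sub_ne_zero.2 hne)
    calc (1:ℝ) = ((1:ℤ):ℝ) := by norm_num
    _ ≤ ((|dB1 β i - dB1 β j| : ℤ) : ℝ) := by exact_mod_cast h1
    _ = _ := by push_cast; rfl
  set A := (Tb β)^[i+1] 1 - (Tb β)^[j+1] 1 with hA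
  set B := (dB1 β i : ℝ) - (dB1 β j : ℝ) with hB
  have e : β * ((Tb β)^[i] 1 - (Tb β)^[j] 1) = A + B := by
    rw [hA, hB]; linear_combination -hrec_i + hrec_j
  have h3 : |B| ≤ |A + B| + |A| := by
    calc |B| = |(A + B) + (-A)| := by ring_nf
    _ ≤ |A + B| + |-A| := abs_add_le _ _
    _ = |A + B| + |A| := by rw [abs_neg]
  have habs : β * |(Tb β)^[i] 1 - (Tb β)^[j] 1| = |A + B| := by
    rw [← e, abs_mul, abs_of_pos hβ0]
  have key : 1 - 1/β^n ≤ β * |(Tb β)^[i] 1 - (Tb β)^[j] 1| := by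
    rw [habs]; linarith
  have heq : 1/β - 1/β * (1/β)^n = (1 - 1/β^n)/β := by
    field_simp
    rw [one_div_pow, sub_mul, one_div_mul_cancel (pow_ne_zero n hβ0.ne'), one_mul]
  rw [heq, div_le_iff₀ hβ0]
  have hcomm : β * |(Tb β)^[i] 1 - (Tb β)^[j] 1| = |(Tb β)^[i] 1 - (Tb β)^[j] 1| * β :=
    mul_comm _ _
  linarith [key]

/-- A sequence in a finite type which is backward deterministic is periodic. -/
lemma periodic_of_backdet {S : Type*} [Finite S] (W : ℕ → S) (g : S → S)
    (hg : ∀ i, g (W (i + 1)) = W i) :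
    ∃ p : ℕ, 0 < p ∧ ∀ i, W (i + p) = W i := by
  have hiter : ∀ t i, g^[t] (W (i + t)) = W i := by
    intro t
    induction t with
    | zero => intro i; simp
    | succ t ih =>
      intro i
      have e : i + (t + 1) = (i + 1) + t := by ring
      rw [e, Function.iterate_succ_apply', ih (i+1), hg]
  obtain ⟨a, b, hab, hfe⟩ :=
    Finite.exists_ne_map_eq_of_infinite (fun k : ℕ => g^[k])
  rcases Nat.lt_or_ge a b with hlt | hge
  · refine ⟨b - a, by omega, fun i => ?_⟩
    have h1 : g^[a] (W ((i + (b - a)) + a)) = W (i + (b - a)) := hiter a _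
    have h2 : g^[b] (W (i + b)) = W i := hiter b i
    have e : (i + (b - a)) + a = i + b := by omega
    rw [e] at h1
    rw [← h1, ← h2, hfe]
  · have hlt : b < a := by omega
    refine ⟨a - b, by omega, fun i => ?_⟩
    have h1 : g^[b] (W ((i + (a - b)) + b)) = W (i + (a - b)) := hiter b _
    have h2 : g^[a] (W (i + a)) = W i := hiter a i
    have e : (i + (a - b)) + b = i + a := by omega
    rw [e] at h1
    rw [← h1, ← h2, hfe]

theorem stmt11 (β : ℝ) (hβ : 1 < β) :
    EventuallyPeriodic (dB1 β) ∨
      1 / β ≤ Metric.diam {x : ℝ | ∃ n : ℕ, (Tb β)^[n] 1 = x} := by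
  by_cases H : ∀ n : ℕ, ∃ i j : ℕ,
      (∀ k, 1 ≤ k → k ≤ n → dB1 β (i + k) = dB1 β (j + k)) ∧ dB1 β i ≠ dB1 β j
  · right
    have hβ0 : (0:ℝ) < β := by linarith
    have hbdd : Bornology.IsBounded {x : ℝ | ∃ n : ℕ, (Tb β)^[n] 1 = x} := by
      apply (Metric.isBounded_Icc (0:ℝ) 1).subset
      rintro x ⟨n, rfl⟩
      exact Tb_iter_mem β n
    have hstep : ∀ n : ℕ,
        1/β - 1/β * (1/β)^n ≤ Metric.diam {x : ℝ | ∃ n : ℕ, (Tb β)^[n] 1 = x} := by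
      intro n
      obtain ⟨i, j, hm, hne⟩ := H n
      refine le_trans (gap β hβ i j n hm hne) ?_
      have hmem1 : (Tb β)^[i] 1 ∈ {x : ℝ | ∃ n : ℕ, (Tb β)^[n] 1 = x} := ⟨i, rfl⟩
      have hmem2 : (Tb β)^[j] 1 ∈ {x : ℝ | ∃ n : ℕ, (Tb β)^[n] 1 = x} := ⟨j, rfl⟩
      have := Metric.dist_le_diam_of_mem hbdd hmem1 hmem2
      rwa [Real.dist_eq] at this
    have h1 : Filter.Tendsto (fun n : ℕ => ((1:ℝ)/β)^n) Filter.atTop (nhds 0) := by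
      apply tendsto_pow_atTop_nhds_zero_of_lt_one (by positivity)
      rw [div_lt_one hβ0]; exact hβ
    have h2 : Filter.Tendsto (fun n : ℕ => 1/β - 1/β * ((1:ℝ)/β)^n)
        Filter.atTop (nhds (1/β)) := by
      have := Filter.Tendsto.sub (tendsto_const_nhds (x := (1:ℝ)/β))
        (Filter.Tendsto.mul (tendsto_const_nhds (x := (1:ℝ)/β)) h1)
      simpa using this
    exact le_of_tendsto' h2 hstep
  · left
    push_neg at H
    obtain ⟨n₀, hdet0⟩ := H
    set N := n₀ + 1 with hN
    have hdet : ∀ i j, (∀ k, 1 ≤ k → k ≤ N → dB1 β (i + k) = dB1 β (j + k)) →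
        dB1 β i = dB1 β j :=
      fun i j h => hdet0 i j (fun k hk1 hk2 => h k hk1 (by omega))
    set M := (⌊β⌋).toNat with hM
    have hdig : ∀ m : ℕ, (dB1 β m).toNat < M + 1 := by
      intro m
      have h1 := dB1_nonneg β hβ m
      have h2 := dB1_le β hβ m
      omega
    set W : ℕ → (Fin N → Fin (M+1)) := fun i k => ⟨(dB1 β (i + k)).toNat, hdig _⟩ with hW
    have hWval : ∀ i j, W i = W j → ∀ k : ℕ, k < N → dB1 β (i + k) = dB1 β (j + k) := by
      intro i j hij k hk
      have h0 := congrFun hij ⟨k, hk⟩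
      have h' : (dB1 β (i + k)).toNat = (dB1 β (j + k)).toNat := by
        simpa [hW] using congrArg Fin.val h0
      have n1 := dB1_nonneg β hβ (i + k)
      have n2 := dB1_nonneg β hβ (j + k)
      omega
    have hWstep : ∀ i j, W (i+1) = W (j+1) → W i = W j := by
      intro i j hij
      have hmatch : ∀ k, 1 ≤ k → k ≤ N → dB1 β (i + k) = dB1 β (j + k) := by
        intro k hk1 hk2
        have h0 := hWval (i+1) (j+1) hij (k - 1) (by omega)
        have e1 : i + 1 + (k-1) = i + k := by omega
        have e2 : j + 1 + (k-1) = j + k := by omega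
        rwa [e1, e2] at h0
      have h0 : dB1 β i = dB1 β j := hdet i j hmatch
      funext k
      have hk : dB1 β (i + (k:ℕ)) = dB1 β (j + (k:ℕ)) := by
        rcases Nat.eq_zero_or_pos (k : ℕ) with h | h
        · rw [h]; simpa using h0
        · exact hmatch (k : ℕ) h (by omega)
      simp [hW, hk]
    classical
    set g : (Fin N → Fin (M+1)) → (Fin N → Fin (M+1)) :=
      fun s => if h : ∃ i, W (i+1) = s then W (Classical.choose h) else s with hg'
    have hg : ∀ i, g (W (i+1)) = W i := by
      intro i
      have hex : ∃ i', W (i'+1) = W (i+1) := ⟨i, rfl⟩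
      have h0 : g (W (i+1)) = W (Classical.choose hex) := by
        simp only [hg']
        rw [dif_pos hex]
      rw [h0]
      exact hWstep _ _ (Classical.choose_spec hex)
    obtain ⟨p, hp, hper⟩ := periodic_of_backdet W g hg
    refine ⟨0, p, hp, fun m _ => ?_⟩
    have h := hWval (m + p) m (hper m) 0 (by omega)
    simpa using h
end
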